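/- arXiv:1807.00333 — 2 statements merged into one kernel-verified Lean document; each statement's English description precedes it below -/
import Mathlib

section
/- For every [a] ∈ Λ₁: |Λ₁^6(a)| = 3, |Λ₂^2(a)| = 12, |Λ₂^6(a)| = 12, |Λ₃^3(a)| = 32, and all other sets Λ_{j'}^m(a) (j' ∈ {1,2,3}, m ∈ {2,3,6}) are empty. -/
open Complex

noncomputable section

namespace G31

/-- Vectors `a = (a₁,a₂,a₃,a₄) ∈ ℂ⁴`. -/
abbrev V : Type := Fin 4 → ℂ

/-- `μ₄ ⊂ ℂ`, the group of fourth roots of unity `{1, i, -1, -i}`. -/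
def mu4 : Set ℂ := {z : ℂ | z ^ 4 = 1}

/-- `Ψ = μ₄ ∪ {0}`. -/
def Psi : Set ℂ := insert 0 mu4

/-- `a ∈ Ψ⁴`. -/
def PsiV (a : V) : Prop := ∀ k, a k ∈ Psi

/-- The diagonal multiplicative action of `μ₄` on `ℂ⁴`: `a ~ b` iff `b = ξ • a` for some
`ξ ∈ μ₄`. -/
def rel (a b : V) : Prop := ∃ ξ : ℂ, ξ ^ 4 = 1 ∧ b = ξ • a

theorem rel_refl (a : V) : rel a a := ⟨1, by norm_num, by simp⟩

theorem rel_symm {a b : V} (h : rel a b) : rel b a := by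
  obtain ⟨ξ, hξ, rfl⟩ := h
  refine ⟨ξ ^ 3, by rw [show (ξ ^ 3) ^ 4 = (ξ ^ 4) ^ 3 by ring, hξ, one_pow], ?_⟩
  rw [smul_smul, show ξ ^ 3 * ξ = ξ ^ 4 by ring, hξ, one_smul]

theorem rel_trans {a b c : V} (h : rel a b) (h' : rel b c) : rel a c := by
  obtain ⟨ξ, hξ, rfl⟩ := h
  obtain ⟨η, hη, rfl⟩ := h'
  exact ⟨η * ξ, by rw [mul_pow, hξ, hη, one_mul], by rw [smul_smul]⟩

/-- The setoid on `ℂ⁴` given by the diagonal `μ₄`-action. -/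
def phiSetoid : Setoid V := ⟨rel, rel_refl, rel_symm, rel_trans⟩

/-- `Φ`, the quotient of `Ψ⁴` (here of `ℂ⁴`) by the diagonal `μ₄`-action. -/
def Phi : Type := Quotient phiSetoid

/-- The class `[a] ∈ Φ` of `a`. -/
def cls (a : V) : Phi := Quotient.mk phiSetoid a

/-- `Supp a = {k : aₖ ≠ 0}`. -/
def Supp (a : V) : Set (Fin 4) := {k | a k ≠ 0}

/-- `prod a = a₁a₂a₃a₄`. -/
def prod4 (a : V) : ℂ := ∏ k, a k

/-- The hyperplane `X_a = {x : ∑ aₖ xₖ = 0} ⊂ ℂ⁴`. -/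
def Xa (a : V) : Set V := {x | ∑ k, a k * x k = 0}

/-- The support of a class `[a] ∈ Φ` (independent of the representative). -/
def SuppC (c : Phi) : Set (Fin 4) := {k | ∃ a : V, cls a = c ∧ a k ≠ 0}

/-- `Λ₁ = {[a] : a ∈ Ψ⁴, |Supp a| = 1}`. -/
def Lambda1 : Set Phi := {c | ∃ a : V, cls a = c ∧ PsiV a ∧ (Supp a).ncard = 1}

/-- `Λ₂ = {[a] : a ∈ Ψ⁴, |Supp a| = 2}`. -/
def Lambda2 : Set Phi := {c | ∃ a : V, cls a = c ∧ PsiV a ∧ (Supp a).ncard = 2}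

/-- `Λ₃ = {[a] : a ∈ Ψ⁴, |Supp a| = 4, prod a = ±1}`. -/
def Lambda3 : Set Phi :=
  {c | ∃ a : V, cls a = c ∧ PsiV a ∧ (Supp a).ncard = 4 ∧ (prod4 a = 1 ∨ prod4 a = -1)}

/-- `Λ = Λ₁ ⊔ Λ₂ ⊔ Λ₃`, the hyperplanes of the reflection arrangement of type `G₃₁`. -/
def Lambda : Set Phi := Lambda1 ∪ Lambda2 ∪ Lambda3

/-- `Λ̂(a,b) = {[c] ∈ Λ : X_c ⊇ X_a ∩ X_b}` (all notions independent of representatives). -/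
def LambdaHat (A B : Phi) : Set Phi :=
  {c | c ∈ Lambda ∧ ∃ xa xb xc : V, cls xa = A ∧ cls xb = B ∧ cls xc = c ∧
    Xa xa ∩ Xa xb ⊆ Xa xc}

/-- `mult(a,b) = |Λ̂(a,b)|`. -/
def mult (A B : Phi) : ℕ := (LambdaHat A B).ncard

/-- `Λ(a,b) = Λ̂(a,b) \ {[a],[b]}`. -/
def LambdaAB (A B : Phi) : Set Phi := LambdaHat A B \ {A, B}

/-- `Λ_{j'}^m(a) = {[b] ∈ Λ_{j'} : [b] ≠ [a], mult(a,b) = m}`, where `S` stands for `Λ_{j'}`. -/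
def LambdaPow (S : Set Phi) (m : ℕ) (A : Phi) : Set Phi :=
  {B | B ∈ S ∧ B ≠ A ∧ mult A B = m}

/-- `diff([a],[b]) = min_ξ |Supp (ξ a − b)|`, the minimum over representatives. -/
def diffC (A B : Phi) : ℕ :=
  sInf {n | ∃ a b : V, cls a = A ∧ cls b = B ∧ (Supp (a - b)).ncard = n}

end G31
namespace G31
open Complex in
lemma mu4_iff {z : ℂ} : z ^ 4 = 1 ↔ z = 1 ∨ z = -1 ∨ z = I ∨ z = -I := by
  constructor
  · intro h
    have h4 : (z - 1) * ((z + 1) * ((z - I) * (z + I))) = 0 := by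
      linear_combination (1 - z ^ 2) * Complex.I_sq + h
    rcases mul_eq_zero.1 h4 with h1 | h4
    · exact Or.inl (by linear_combination h1)
    · rcases mul_eq_zero.1 h4 with h1 | h4
      · exact Or.inr (Or.inl (by linear_combination h1))
      · rcases mul_eq_zero.1 h4 with h1 | h1
        · exact Or.inr (Or.inr (Or.inl (by linear_combination h1)))
        · exact Or.inr (Or.inr (Or.inr (by linear_combination h1)))
  · rintro (rfl | rfl | rfl | rfl) <;> norm_num [pow_succ, Complex.I_mul_I]

lemma mu4_ne_zero {z : ℂ} (h : z ^ 4 = 1) : z ≠ 0 := by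
  rintro rfl; norm_num at h

lemma cls_eq_iff {a b : V} : cls a = cls b ↔ rel a b := by
  constructor
  · intro h; exact Quotient.exact h
  · intro h; exact Quotient.sound h

lemma Supp_eq_of_rel {a b : V} (h : rel a b) : Supp a = Supp b := by
  obtain ⟨ξ, hξ, rfl⟩ := h
  ext k
  simp [Supp, Pi.smul_apply, smul_eq_mul, mul_eq_zero, mu4_ne_zero hξ]

lemma Xa_eq_of_rel {a b : V} (h : rel a b) : Xa a = Xa b := by
  obtain ⟨ξ, hξ, rfl⟩ := h
  ext x
  simp only [Xa, Set.mem_setOf_eq, Pi.smul_apply, smul_eq_mul, mul_assoc, ← Finset.mul_sum]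
  constructor
  · intro h'; rw [h', mul_zero]
  · intro h'; exact (mul_eq_zero.1 h').resolve_left (mu4_ne_zero hξ)

/-- standard basis vectors -/
def E (j : Fin 4) : V := fun k => if k = j then 1 else 0

lemma mem_Xa_E {j : Fin 4} {x : V} : x ∈ Xa (E j) ↔ x j = 0 := by
  simp [Xa, E, ite_mul, one_mul, zero_mul, Finset.sum_ite_eq']

lemma Supp_E (j : Fin 4) : Supp (E j) = {j} := by
  ext k
  by_cases h : k = j <;> simp [Supp, E, h]

lemma PsiV_E (j : Fin 4) : PsiV (E j) := by
  intro k
  by_cases h : k = j <;> simp [E, h, Psi, mu4]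

lemma clsE_mem_Lambda1 (j : Fin 4) : cls (E j) ∈ Lambda1 :=
  ⟨E j, rfl, PsiV_E j, by rw [Supp_E]; simp⟩
lemma mem_LambdaHat_iff {a b : V} {c : Phi} :
    c ∈ LambdaHat (cls a) (cls b) ↔ c ∈ Lambda ∧ ∃ w, cls w = c ∧ Xa a ∩ Xa b ⊆ Xa w := by
  constructor
  · rintro ⟨hL, xa, xb, xc, ha, hb, hc, hsub⟩
    refine ⟨hL, xc, hc, ?_⟩
    rwa [← Xa_eq_of_rel (cls_eq_iff.1 ha), ← Xa_eq_of_rel (cls_eq_iff.1 hb)]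
  · rintro ⟨hL, w, hw, hsub⟩; exact ⟨hL, a, b, w, rfl, rfl, hw, hsub⟩

lemma hat_rel {j : Fin 4} {b w : V} (h : Xa (E j) ∩ Xa b ⊆ Xa w)
    {k l : Fin 4} (hk : k ≠ j) (hl : l ≠ j) : w k * b l = w l * b k := by
  by_cases hkl : k = l
  · subst hkl; ring
  · set v : V := fun m => b l * (if m = k then 1 else 0) - b k * (if m = l then 1 else 0) with hv
    have hsum : ∀ u : V, ∑ m, u m * v m = u k * b l - u l * b k := by
      intro u
      have : ∀ m, u m * v m = (if m = k then u m * b l else 0) - (if m = l then u m * b k else 0) := by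
        intro m
        by_cases h1 : m = k
        · by_cases h2 : m = l
          · exact absurd (h1.symm.trans h2) hkl
          · subst h1; simp [hv, h2]
        · by_cases h2 : m = l
          · subst h2; simp [hv, h1]
          · simp [hv, h1, h2]
      rw [Finset.sum_congr rfl fun m _ => this m, Finset.sum_sub_distrib,
        Finset.sum_ite_eq' Finset.univ k (fun m => u m * b l),
        Finset.sum_ite_eq' Finset.univ l (fun m => u m * b k)]
      simp
    have h1 : v ∈ Xa (E j) := by
      rw [mem_Xa_E]
      simp [hv, (Ne.symm hk : j ≠ k), (Ne.symm hl : j ≠ l)]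
    have h2 : v ∈ Xa b := by
      show ∑ m, b m * v m = 0
      rw [hsum]; ring
    have h3 : ∑ m, w m * v m = 0 := h ⟨h1, h2⟩
    rw [hsum] at h3
    linear_combination h3

lemma others (j : Fin 4) : ∃ p q r : Fin 4,
    ({j, p, q, r} : Finset (Fin 4)) = Finset.univ ∧
    j ≠ p ∧ j ≠ q ∧ j ≠ r ∧ p ≠ q ∧ p ≠ r ∧ q ≠ r := by
  fin_cases j
  · exact ⟨1, 2, 3, by decide⟩
  · exact ⟨0, 2, 3, by decide⟩
  · exact ⟨0, 1, 3, by decide⟩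
  · exact ⟨0, 1, 2, by decide⟩

lemma cover {j p q r : Fin 4} (hu : ({j, p, q, r} : Finset (Fin 4)) = Finset.univ) :
    ∀ m, m = j ∨ m = p ∨ m = q ∨ m = r := by
  intro m
  have := Finset.mem_univ m
  rw [← hu] at this
  simpa using this

lemma sum_four (f : Fin 4 → ℂ) {j p q r : Fin 4}
    (hu : ({j, p, q, r} : Finset (Fin 4)) = Finset.univ)
    (h1 : j ≠ p) (h2 : j ≠ q) (h3 : j ≠ r) (h4 : p ≠ q) (h5 : p ≠ r) (h6 : q ≠ r) :
    ∑ m, f m = f j + f p + f q + f r := by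
  rw [← hu, Finset.sum_insert (by simp [h1, h2, h3]), Finset.sum_insert (by simp [h4, h5]),
    Finset.sum_insert (by simp [h6]), Finset.sum_singleton]
  ring

lemma prod_four (f : Fin 4 → ℂ) {j p q r : Fin 4}
    (hu : ({j, p, q, r} : Finset (Fin 4)) = Finset.univ)
    (h1 : j ≠ p) (h2 : j ≠ q) (h3 : j ≠ r) (h4 : p ≠ q) (h5 : p ≠ r) (h6 : q ≠ r) :
    ∏ m, f m = f j * f p * f q * f r := by
  rw [← hu, Finset.prod_insert (by simp [h1, h2, h3]), Finset.prod_insert (by simp [h4, h5]),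
    Finset.prod_insert (by simp [h6]), Finset.prod_singleton]
  ring

lemma psiv_pow {a : V} (ha : PsiV a) {k : Fin 4} (h0 : a k ≠ 0) : a k ^ 4 = 1 := by
  rcases Set.mem_insert_iff.1 (ha k) with h | h
  · exact absurd h h0
  · exact h

lemma rep1 {a : V} (ha : PsiV a) (h1 : (Supp a).ncard = 1) : ∃ j, cls a = cls (E j) := by
  obtain ⟨j, hj⟩ := Set.ncard_eq_one.1 h1
  refine ⟨j, ?_⟩
  have haj : a j ≠ 0 := by
    have : j ∈ Supp a := by rw [hj]; rfl
    exact this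
  rw [cls_eq_iff]
  refine rel_symm ⟨a j, psiv_pow ha haj, ?_⟩
  funext k
  by_cases hk : k = j
  · subst hk; simp [E]
  · have : k ∉ Supp a := by rw [hj]; simp [hk]
    simp only [Supp, Set.mem_setOf_eq, not_not] at this
    simp [E, hk, this]

lemma rep2 {b : V} (hb : PsiV b) {s t : Fin 4} (hst : s ≠ t) (hsupp : Supp b = {s, t}) :
    ∃ ζ : ℂ, ζ ^ 4 = 1 ∧ cls b = cls (E s + ζ • E t) := by
  have hbs : b s ≠ 0 := by have : s ∈ Supp b := by rw [hsupp]; simp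
                           exact this
  have hbt : b t ≠ 0 := by have : t ∈ Supp b := by rw [hsupp]; simp
                           exact this
  refine ⟨b t / b s, ?_, ?_⟩
  · rw [div_pow, psiv_pow hb hbt, psiv_pow hb hbs]; norm_num
  · rw [cls_eq_iff]
    refine rel_symm ⟨b s, psiv_pow hb hbs, ?_⟩
    funext k
    simp only [Pi.smul_apply, Pi.add_apply, smul_eq_mul]
    by_cases hk : k = s
    · subst hk; simp [E, hst]
    · by_cases hk' : k = t
      · subst hk'; simp [E, Ne.symm hst]
        field_simp
      · have : k ∉ Supp b := by rw [hsupp]; simp [hk, hk']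
        simp only [Supp, Set.mem_setOf_eq, not_not] at this
        simp [E, hk, hk', this]

lemma supp_univ {b : V} (h4 : (Supp b).ncard = 4) : ∀ k, b k ≠ 0 := by
  have : Supp b = Set.univ := by
    apply Set.eq_of_subset_of_ncard_le (Set.subset_univ _)
    · rw [h4, Set.ncard_univ]; simp
  intro k
  have : k ∈ Supp b := this ▸ Set.mem_univ k
  exact this

lemma Supp_Est {s t : Fin 4} (hst : s ≠ t) {ζ : ℂ} (hζ : ζ ≠ 0) :
    Supp (E s + ζ • E t) = {s, t} := by
  ext k
  by_cases h1 : k = s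
  · subst h1; simp [Supp, E, hst]
  · by_cases h2 : k = t
    · subst h2; simp [Supp, E, Ne.symm hst, hζ]
    · simp [Supp, E, h1, h2]

lemma PsiV_Est {s t : Fin 4} (hst : s ≠ t) {ζ : ℂ} (hζ : ζ ^ 4 = 1) :
    PsiV (E s + ζ • E t) := by
  intro k
  by_cases h1 : k = s
  · subst h1; simp [E, hst, Psi, mu4]
  · by_cases h2 : k = t
    · subst h2; simp [E, Ne.symm hst, Psi, mu4, hζ]
    · simp [E, h1, h2, Psi]

lemma clsEst_mem_Lambda2 {s t : Fin 4} (hst : s ≠ t) {ζ : ℂ} (hζ : ζ ^ 4 = 1) :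
    cls (E s + ζ • E t) ∈ Lambda2 :=
  ⟨E s + ζ • E t, rfl, PsiV_Est hst hζ, by
    rw [Supp_Est hst (mu4_ne_zero hζ), Set.ncard_pair hst]⟩
lemma sum_two {f : Fin 4 → ℂ} {s t : Fin 4} (hst : s ≠ t)
    (h : ∀ m, m ≠ s → m ≠ t → f m = 0) : ∑ m, f m = f s + f t := by
  rw [← Finset.sum_subset (Finset.subset_univ ({s, t} : Finset (Fin 4)))
      (fun x _ hx => by
        simp only [Finset.mem_insert, Finset.mem_singleton] at hx
        push_neg at hx
        exact h x hx.1 hx.2),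
    Finset.sum_pair hst]

lemma clsE_inj {j k : Fin 4} (h : cls (E j) = cls (E k)) : j = k := by
  have := Supp_eq_of_rel (cls_eq_iff.1 h)
  rw [Supp_E, Supp_E] at this
  exact Set.singleton_eq_singleton_iff.1 this

lemma clsEst_inj {s t : Fin 4} (hst : s ≠ t) {ζ ζ' : ℂ}
    (h : cls (E s + ζ • E t) = cls (E s + ζ' • E t)) : ζ = ζ' := by
  obtain ⟨ξ, hξ, heq⟩ := cls_eq_iff.1 h
  have hs := congrFun heq s
  have ht := congrFun heq t
  simp [E, hst, Ne.symm hst] at hs ht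
  rw [← hs, one_mul] at ht
  exact ht.symm

lemma clsEst_ne_clsE {s t m : Fin 4} (hst : s ≠ t) {ζ : ℂ} (hζ : ζ ≠ 0) :
    cls (E s + ζ • E t) ≠ cls (E m) := by
  intro h
  have := Supp_eq_of_rel (cls_eq_iff.1 h)
  rw [Supp_Est hst hζ, Supp_E] at this
  have h2 : ({s, t} : Set (Fin 4)).ncard = ({m} : Set (Fin 4)).ncard := by rw [this]
  rw [Set.ncard_pair hst, Set.ncard_singleton] at h2
  exact absurd h2 (by norm_num)

lemma mu4_set_eq : {z : ℂ | z ^ 4 = 1} = {1, -1, I, -I} := by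
  ext z
  simp only [Set.mem_setOf_eq, Set.mem_insert_iff, Set.mem_singleton_iff]
  exact mu4_iff

lemma mu4_explicit_ncard : ({1, -1, I, -I} : Set ℂ).ncard = 4 := by
  have f1 : ({-I} : Set ℂ).Finite := Set.finite_singleton _
  have f2 : ({I, -I} : Set ℂ).Finite := f1.insert _
  have f3 : ({-1, I, -I} : Set ℂ).Finite := f2.insert _
  rw [Set.ncard_insert_of_notMem (by norm_num [Complex.ext_iff]) f3,
    Set.ncard_insert_of_notMem (by norm_num [Complex.ext_iff]) f2,
    Set.ncard_insert_of_notMem (by norm_num [Complex.ext_iff]) f1,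
    Set.ncard_singleton]

/-- the 6-element candidate set -/
def hatSix (j k : Fin 4) : Set Phi :=
  insert (cls (E j)) (insert (cls (E k)) ((fun ζ => cls (E j + ζ • E k)) '' {z : ℂ | z ^ 4 = 1}))

lemma hatSix_ncard {j k : Fin 4} (hjk : j ≠ k) : (hatSix j k).ncard = 6 := by
  have himf : ((fun ζ => cls (E j + ζ • E k)) '' {z : ℂ | z ^ 4 = 1}).Finite := by
    rw [mu4_set_eq]
    exact (((Set.finite_singleton _).insert _).insert _).insert _ |>.image _
  have himcard : ((fun ζ => cls (E j + ζ • E k)) '' {z : ℂ | z ^ 4 = 1}).ncard = 4 := by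
    have hinj := Set.ncard_image_of_injOn (f := fun ζ => cls (E j + ζ • E k))
      (s := {z : ℂ | z ^ 4 = 1}) (fun x _ y _ h => clsEst_inj hjk h)
    rw [hinj, mu4_set_eq, mu4_explicit_ncard]
  have hEj_not : cls (E j) ∉ (fun ζ => cls (E j + ζ • E k)) '' {z : ℂ | z ^ 4 = 1} := by
    rintro ⟨ζ, hζ, h⟩
    exact clsEst_ne_clsE hjk (mu4_ne_zero hζ) h
  have hEk_not : cls (E k) ∉ (fun ζ => cls (E j + ζ • E k)) '' {z : ℂ | z ^ 4 = 1} := by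
    rintro ⟨ζ, hζ, h⟩
    exact clsEst_ne_clsE hjk (mu4_ne_zero hζ) h
  rw [hatSix, Set.ncard_insert_of_notMem (by
      simp only [Set.mem_insert_iff]
      push_neg
      exact ⟨fun h => hjk (clsE_inj h), hEj_not⟩) (himf.insert _),
    Set.ncard_insert_of_notMem hEk_not himf, himcard]
lemma L1sub : Lambda1 ⊆ Lambda := fun _ h => Set.mem_union_left _ (Set.mem_union_left _ h)
lemma L2sub : Lambda2 ⊆ Lambda := fun _ h => Set.mem_union_left _ (Set.mem_union_right _ h)
lemma L3sub : Lambda3 ⊆ Lambda := fun _ h => Set.mem_union_right _ h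

lemma Lambda_rep {c : Phi} (h : c ∈ Lambda) : ∃ w, cls w = c ∧ PsiV w ∧
    ((Supp w).ncard = 1 ∨ (Supp w).ncard = 2 ∨
      ((Supp w).ncard = 4 ∧ (prod4 w = 1 ∨ prod4 w = -1))) := by
  rcases h with (⟨w, h1, h2, h3⟩ | ⟨w, h1, h2, h3⟩) | ⟨w, h1, h2, h3, h4⟩
  · exact ⟨w, h1, h2, Or.inl h3⟩
  · exact ⟨w, h1, h2, Or.inr (Or.inl h3)⟩
  · exact ⟨w, h1, h2, Or.inr (Or.inr ⟨h3, h4⟩)⟩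

lemma hat_six {j k : Fin 4} (hjk : j ≠ k) {b : V} (hL : cls b ∈ Lambda)
    (hsupp : ∀ m, m ≠ j → m ≠ k → b m = 0) (hbk : b k ≠ 0) :
    LambdaHat (cls (E j)) (cls b) = hatSix j k := by
  ext c
  constructor
  · intro hc
    obtain ⟨hcL, w0, hw0, hsub0⟩ := mem_LambdaHat_iff.1 hc
    obtain ⟨w, hw, hPsi, hcase⟩ := Lambda_rep hcL
    have hsub : Xa (E j) ∩ Xa b ⊆ Xa w := by
      rwa [Xa_eq_of_rel (cls_eq_iff.1 (hw0.trans hw.symm))] at hsub0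
    have hzero : ∀ m, m ≠ j → m ≠ k → w m = 0 := by
      intro m hmj hmk
      have h1 := hat_rel hsub hmj (Ne.symm hjk)
      rw [hsupp m hmj hmk, mul_zero] at h1
      exact (mul_eq_zero.1 h1).resolve_right hbk
    have hsuppw : Supp w ⊆ {j, k} := by
      intro m hm
      by_contra hmem
      simp only [Set.mem_insert_iff, Set.mem_singleton_iff, not_or] at hmem
      exact hm (hzero m hmem.1 hmem.2)
    rcases hcase with h1 | h2 | h4
    · obtain ⟨m, hcls⟩ := rep1 hPsi h1
      have hmm : m ∈ Supp w := by
        rw [Supp_eq_of_rel (cls_eq_iff.1 hcls), Supp_E]; rfl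
      rcases hsuppw hmm with h | h
      · subst h; exact Or.inl (hw ▸ hcls ▸ rfl)
      · rw [Set.mem_singleton_iff] at h
        subst h
        exact Or.inr (Or.inl (hw ▸ hcls ▸ rfl))
    · obtain ⟨s, t, hst, hsupp2⟩ := Set.ncard_eq_two.1 h2
      have hjk' : Supp w = {j, k} := by
        have hs : s ∈ ({j, k} : Set (Fin 4)) := hsuppw (by rw [hsupp2]; simp)
        have ht : t ∈ ({j, k} : Set (Fin 4)) := hsuppw (by rw [hsupp2]; simp)
        simp only [Set.mem_insert_iff, Set.mem_singleton_iff] at hs ht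
        rcases hs with rfl | rfl <;> rcases ht with rfl | rfl
        · exact absurd rfl hst
        · exact hsupp2
        · rw [hsupp2, Set.pair_comm]
        · exact absurd rfl hst
      obtain ⟨ζ, hζ, hcls⟩ := rep2 hPsi hjk hjk'
      exact Or.inr (Or.inr ⟨ζ, hζ, hw ▸ hcls ▸ rfl⟩)
    · exfalso
      have := Set.ncard_le_ncard hsuppw ((Set.finite_singleton _).insert _)
      rw [h4.1, Set.ncard_pair hjk] at this
      omega
  · intro hc
    simp only [hatSix, Set.mem_insert_iff, Set.mem_image, Set.mem_setOf_eq] at hc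
    rcases hc with rfl | rfl | ⟨ζ, hζ, rfl⟩
    · exact mem_LambdaHat_iff.2 ⟨L1sub (clsE_mem_Lambda1 j), E j, rfl, Set.inter_subset_left⟩
    · refine mem_LambdaHat_iff.2 ⟨L1sub (clsE_mem_Lambda1 k), E k, rfl, ?_⟩
      rintro x ⟨hx1, hx2⟩
      rw [mem_Xa_E] at hx1 ⊢
      have hs2 : ∑ m, b m * x m = b j * x j + b k * x k :=
        sum_two hjk (fun m hm1 hm2 => by rw [hsupp m hm1 hm2, zero_mul])
      have hx2' : b j * x j + b k * x k = 0 := by rw [← hs2]; exact hx2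
      rw [hx1, mul_zero, zero_add] at hx2'
      exact (mul_eq_zero.1 hx2').resolve_left hbk
    · refine mem_LambdaHat_iff.2 ⟨L2sub (clsEst_mem_Lambda2 hjk hζ), E j + ζ • E k, rfl, ?_⟩
      rintro x ⟨hx1, hx2⟩
      rw [mem_Xa_E] at hx1
      have hxk : x k = 0 := by
        have hs2 : ∑ m, b m * x m = b j * x j + b k * x k :=
          sum_two hjk (fun m hm1 hm2 => by rw [hsupp m hm1 hm2, zero_mul])
        have hx2' : b j * x j + b k * x k = 0 := by rw [← hs2]; exact hx2
        rw [hx1, mul_zero, zero_add] at hx2'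
        exact (mul_eq_zero.1 hx2').resolve_left hbk
      show ∑ m, (E j + ζ • E k) m * x m = 0
      have hs3 : ∑ m, (E j + ζ • E k) m * x m
          = (E j + ζ • E k) j * x j + (E j + ζ • E k) k * x k :=
        sum_two hjk (fun m hm1 hm2 => by simp [E, hm1, hm2])
      rw [hs3, hx1, hxk, mul_zero, mul_zero, add_zero]

lemma mult_six {j k : Fin 4} (hjk : j ≠ k) {b : V} (hL : cls b ∈ Lambda)
    (hsupp : ∀ m, m ≠ j → m ≠ k → b m = 0) (hbk : b k ≠ 0) :
    mult (cls (E j)) (cls b) = 6 := by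
  rw [mult, hat_six hjk hL hsupp hbk, hatSix_ncard hjk]
lemma ncard_le_one_of_subset_singleton {s : Set (Fin 4)} {j : Fin 4} (h : s ⊆ {j}) :
    s.ncard ≤ 1 := by
  have := Set.ncard_le_ncard h (Set.finite_singleton j)
  rwa [Set.ncard_singleton] at this

lemma clsE_ne_cls_of_supp {j m : Fin 4} {b : V} (hm : m ≠ j) (hbm : b m ≠ 0) :
    cls (E j) ≠ cls b := by
  intro h
  have hs := Supp_eq_of_rel (cls_eq_iff.1 h)
  rw [Supp_E] at hs
  have : m ∈ ({j} : Set (Fin 4)) := hs ▸ hbm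
  exact hm this

lemma hat_two {j p q r : Fin 4}
    (hu : ({j, p, q, r} : Finset (Fin 4)) = Finset.univ)
    (h1 : j ≠ p) (h2 : j ≠ q) (h3 : j ≠ r) (h4 : p ≠ q) (h5 : p ≠ r) (h6 : q ≠ r)
    {b : V} (hb : PsiV b) (hL : cls b ∈ Lambda)
    (hs0 : ∀ m, m ≠ p → m ≠ q → b m = 0) (hbp : b p ≠ 0) (hbq : b q ≠ 0) :
    LambdaHat (cls (E j)) (cls b) = {cls (E j), cls b} := by
  ext c
  constructor
  · intro hc
    obtain ⟨hcL, w0, hw0, hsub0⟩ := mem_LambdaHat_iff.1 hc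
    obtain ⟨w, hw, hPsi, hcase⟩ := Lambda_rep hcL
    have hsub : Xa (E j) ∩ Xa b ⊆ Xa w := by
      rwa [Xa_eq_of_rel (cls_eq_iff.1 (hw0.trans hw.symm))] at hsub0
    have hwr : w r = 0 := by
      have := hat_rel hsub (Ne.symm h3) (Ne.symm h1)   -- w r * b p = w p * b r
      rw [hs0 r (Ne.symm h5) (Ne.symm h6), mul_zero] at this
      exact (mul_eq_zero.1 this).resolve_right hbp
    have hpq : w p * b q = w q * b p := hat_rel hsub (Ne.symm h1) (Ne.symm h2)
    by_cases hwp : w p = 0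
    · have hwq : w q = 0 := by
        rw [hwp, zero_mul] at hpq
        exact (mul_eq_zero.1 hpq.symm).resolve_right hbp
      have hss : Supp w ⊆ {j} := by
        intro m hm
        rcases cover hu m with rfl | rfl | rfl | rfl
        · rfl
        · exact absurd hwp hm
        · exact absurd hwq hm
        · exact absurd hwr hm
      rcases hcase with hn | hn | hn
      · obtain ⟨m, hcls⟩ := rep1 hPsi hn
        have hmm : m ∈ Supp w := by
          rw [Supp_eq_of_rel (cls_eq_iff.1 hcls), Supp_E]; rfl
        have : m = j := hss hmm
        subst this
        exact Or.inl (hw ▸ hcls ▸ rfl)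
      · have := ncard_le_one_of_subset_singleton hss; omega
      · have := ncard_le_one_of_subset_singleton hss; omega
    · have hwq : w q ≠ 0 := by
        intro h
        rw [h, zero_mul] at hpq
        exact hwp ((mul_eq_zero.1 hpq).resolve_right hbq)
      have hwj : w j = 0 := by
        by_contra hwj
        have hsupp3 : Supp w = {j, p, q} := by
          ext m
          constructor
          · intro hm
            rcases cover hu m with rfl | rfl | rfl | rfl
            · simp
            · simp
            · simp
            · exact absurd hwr hm
          · intro hm
            simp only [Set.mem_insert_iff, Set.mem_singleton_iff] at hm
            rcases hm with rfl | rfl | rfl <;> assumption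
        have hn3 : (Supp w).ncard = 3 := by
          rw [hsupp3, Set.ncard_insert_of_notMem (by simp [h1, h2])
            ((Set.finite_singleton _).insert _), Set.ncard_pair h4]
        rcases hcase with hn | hn | hn
        · omega
        · omega
        · omega
      right
      rw [← hw, Set.mem_singleton_iff, cls_eq_iff]
      refine rel_symm ⟨w p / b p, ?_, ?_⟩
      · rw [div_pow, psiv_pow hPsi hwp, psiv_pow hb hbp]; norm_num
      · funext m
        simp only [Pi.smul_apply, smul_eq_mul]
        rcases cover hu m with rfl | rfl | rfl | rfl
        · rw [hwj, hs0 _ h1 h2, mul_zero]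
        · field_simp
        · field_simp
          linear_combination -hpq
        · rw [hwr, hs0 _ (Ne.symm h5) (Ne.symm h6), mul_zero]
  · intro hc
    rcases hc with rfl | rfl
    · exact mem_LambdaHat_iff.2 ⟨L1sub (clsE_mem_Lambda1 j), E j, rfl, Set.inter_subset_left⟩
    · exact mem_LambdaHat_iff.2 ⟨hL, b, rfl, Set.inter_subset_right⟩

lemma mult_two {j p q r : Fin 4}
    (hu : ({j, p, q, r} : Finset (Fin 4)) = Finset.univ)
    (h1 : j ≠ p) (h2 : j ≠ q) (h3 : j ≠ r) (h4 : p ≠ q) (h5 : p ≠ r) (h6 : q ≠ r)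
    {b : V} (hb : PsiV b) (hL : cls b ∈ Lambda)
    (hs0 : ∀ m, m ≠ p → m ≠ q → b m = 0) (hbp : b p ≠ 0) (hbq : b q ≠ 0) :
    mult (cls (E j)) (cls b) = 2 := by
  rw [mult, hat_two hu h1 h2 h3 h4 h5 h6 hb hL hs0 hbp hbq,
    Set.ncard_pair (clsE_ne_cls_of_supp h1.symm hbp)]
/-- flip the sign of coordinate `j` -/
def negj (j : Fin 4) (b : V) : V := fun m => if m = j then -(b m) else b m

lemma negj_same (j : Fin 4) (b : V) : negj j b j = -(b j) := if_pos rfl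

lemma negj_other {m j : Fin 4} (h : m ≠ j) (b : V) : negj j b m = b m := if_neg h

lemma PsiV_negj {j : Fin 4} {b : V} (hb : PsiV b) : PsiV (negj j b) := by
  intro k
  by_cases hk : k = j
  · subst hk
    rw [negj_same]
    rcases Set.mem_insert_iff.1 (hb k) with h | h
    · rw [h, neg_zero]; exact Set.mem_insert _ _
    · refine Set.mem_insert_iff.2 (Or.inr ?_)
      show (-(b k)) ^ 4 = 1
      rw [show (-(b k)) ^ 4 = (b k) ^ 4 by ring]
      exact h
  · rw [negj_other hk]
    exact hb k

lemma negj_mem_Lambda3 {j p q r : Fin 4}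
    (hu : ({j, p, q, r} : Finset (Fin 4)) = Finset.univ)
    (h1 : j ≠ p) (h2 : j ≠ q) (h3 : j ≠ r) (h4 : p ≠ q) (h5 : p ≠ r) (h6 : q ≠ r)
    {b : V} (hb : PsiV b) (hbne : ∀ m, b m ≠ 0)
    (hprod : prod4 b = 1 ∨ prod4 b = -1) : cls (negj j b) ∈ Lambda3 := by
  refine ⟨negj j b, rfl, PsiV_negj hb, ?_, ?_⟩
  · have : Supp (negj j b) = Set.univ := by
      ext m
      simp only [Set.mem_univ, iff_true, Supp, Set.mem_setOf_eq]
      by_cases hm : m = j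
      · subst hm; rw [negj_same]; exact neg_ne_zero.2 (hbne m)
      · rw [negj_other hm]; exact hbne m
    rw [this, Set.ncard_univ, Nat.card_eq_fintype_card, Fintype.card_fin]
  · have hme : prod4 (negj j b) = -prod4 b := by
      rw [prod4, prod4, prod_four _ hu h1 h2 h3 h4 h5 h6, prod_four _ hu h1 h2 h3 h4 h5 h6,
        negj_same, negj_other (Ne.symm h1), negj_other (Ne.symm h2), negj_other (Ne.symm h3)]
      ring
    rcases hprod with h | h <;> rw [hme, h] <;> norm_num

lemma b_mem_Lambda3 {b : V} (hb : PsiV b) (hbne : ∀ m, b m ≠ 0)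
    (hprod : prod4 b = 1 ∨ prod4 b = -1) : cls b ∈ Lambda3 := by
  refine ⟨b, rfl, hb, ?_, hprod⟩
  have : Supp b = Set.univ := Set.eq_univ_of_forall fun m => hbne m
  rw [this, Set.ncard_univ, Nat.card_eq_fintype_card, Fintype.card_fin]

lemma cls_negj_ne {j p : Fin 4} (hjp : j ≠ p) {b : V} (hbp : b p ≠ 0) (hbj : b j ≠ 0) :
    cls b ≠ cls (negj j b) := by
  intro h
  obtain ⟨ξ, hξ, heq⟩ := cls_eq_iff.1 h
  have hp : b p = ξ * b p := by
    have := congrFun heq p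
    rwa [negj_other (Ne.symm hjp), Pi.smul_apply, smul_eq_mul] at this
  have hj : -(b j) = ξ * b j := by
    have := congrFun heq j
    rwa [negj_same, Pi.smul_apply, smul_eq_mul] at this
  have hξ1 : ξ = 1 := by
    have h0 : (ξ - 1) * b p = 0 := by linear_combination -hp
    rcases mul_eq_zero.1 h0 with h' | h'
    · linear_combination h'
    · exact absurd h' hbp
  rw [hξ1, one_mul] at hj
  apply hbj
  linear_combination -hj / 2

lemma hat_three {j p q r : Fin 4}
    (hu : ({j, p, q, r} : Finset (Fin 4)) = Finset.univ)
    (h1 : j ≠ p) (h2 : j ≠ q) (h3 : j ≠ r) (h4 : p ≠ q) (h5 : p ≠ r) (h6 : q ≠ r)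
    {b : V} (hb : PsiV b) (hbne : ∀ m, b m ≠ 0)
    (hprod : prod4 b = 1 ∨ prod4 b = -1) :
    LambdaHat (cls (E j)) (cls b) = {cls (E j), cls b, cls (negj j b)} := by
  have hbp := hbne p
  have hbq := hbne q
  have hbr := hbne r
  have hbj := hbne j
  ext c
  constructor
  · intro hc
    obtain ⟨hcL, w0, hw0, hsub0⟩ := mem_LambdaHat_iff.1 hc
    obtain ⟨w, hw, hPsi, hcase⟩ := Lambda_rep hcL
    have hsub : Xa (E j) ∩ Xa b ⊆ Xa w := by
      rwa [Xa_eq_of_rel (cls_eq_iff.1 (hw0.trans hw.symm))] at hsub0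
    have hpq : w p * b q = w q * b p := hat_rel hsub (Ne.symm h1) (Ne.symm h2)
    have hpr : w p * b r = w r * b p := hat_rel hsub (Ne.symm h1) (Ne.symm h3)
    have hqr : w q * b r = w r * b q := hat_rel hsub (Ne.symm h2) (Ne.symm h3)
    by_cases hwp : w p = 0
    · have hwq : w q = 0 := by
        rw [hwp, zero_mul] at hpq
        exact (mul_eq_zero.1 hpq.symm).resolve_right hbp
      have hwr : w r = 0 := by
        rw [hwp, zero_mul] at hpr
        exact (mul_eq_zero.1 hpr.symm).resolve_right hbp
      have hss : Supp w ⊆ {j} := by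
        intro m hm
        rcases cover hu m with rfl | rfl | rfl | rfl
        · rfl
        · exact absurd hwp hm
        · exact absurd hwq hm
        · exact absurd hwr hm
      rcases hcase with hn | hn | hn
      · obtain ⟨m, hcls⟩ := rep1 hPsi hn
        have hmm : m ∈ Supp w := by
          rw [Supp_eq_of_rel (cls_eq_iff.1 hcls), Supp_E]; rfl
        have : m = j := hss hmm
        subst this
        exact Or.inl (hw ▸ hcls ▸ rfl)
      · have := ncard_le_one_of_subset_singleton hss; omega
      · have := ncard_le_one_of_subset_singleton hss; omega
    · have hwq : w q ≠ 0 := by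
        intro h
        rw [h, zero_mul] at hpq
        exact hbq ((mul_eq_zero.1 hpq).resolve_left hwp)
      have hwr : w r ≠ 0 := by
        intro h
        rw [h, zero_mul] at hpr
        exact hbr ((mul_eq_zero.1 hpr).resolve_left hwp)
      have hsub3 : ({p, q, r} : Set (Fin 4)) ⊆ Supp w := by
        intro m hm
        rcases hm with rfl | rfl | rfl <;> assumption
      have hge3 : 3 ≤ (Supp w).ncard := by
        have := Set.ncard_le_ncard hsub3 (Set.toFinite _)
        rwa [Set.ncard_insert_of_notMem (by simp [h4, h5])
          ((Set.finite_singleton _).insert _), Set.ncard_pair h6] at this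
      rcases hcase with hn | hn | hn
      · omega
      · omega
      obtain ⟨hn4, hprodw⟩ := hn
      have hw4 : w p ^ 4 = 1 := psiv_pow hPsi hwp
      have hb4 : b p ^ 4 = 1 := psiv_pow hb hbp
      have hPw : w j * w p * w q * w r = prod4 w := by
        rw [prod4, prod_four _ hu h1 h2 h3 h4 h5 h6]
      have hPb : b j * b p * b q * b r = prod4 b := by
        rw [prod4, prod_four _ hu h1 h2 h3 h4 h5 h6]
      have hM : w p ^ 3 * b q * b r ≠ 0 := by
        apply mul_ne_zero (mul_ne_zero (pow_ne_zero _ hwp) hbq) hbr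
      -- key sign dichotomy
      have hXM : ∀ e1 : ℂ, prod4 w = e1 →
          (w j * b p) * (w p ^ 3 * b q * b r) = e1 * b p ^ 3 := by
        intro e1 he1
        rw [he1] at hPw
        linear_combination b p ^ 3 * hPw - (w j * w p * w p * b r * b p) * hpq.symm -
          (w j * w p * w q * b p * b p) * hpr.symm
      have hYM : ∀ e2 : ℂ, prod4 b = e2 →
          (w p * b j) * (w p ^ 3 * b q * b r) = e2 * b p ^ 3 := by
        intro e2 he2
        rw [he2] at hPb
        linear_combination (b j * b q * b r) * hw4 + b p ^ 3 * hPb - (b j * b q * b r) * hb4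
      have key : w j * b p = w p * b j ∨ w j * b p = -(w p * b j) := by
        rcases hprodw with hP | hP <;> rcases hprod with hQ | hQ
        · left
          apply mul_right_cancel₀ hM
          linear_combination hXM 1 hP - hYM 1 hQ
        · right
          apply mul_right_cancel₀ hM
          linear_combination hXM 1 hP + hYM (-1) hQ
        · right
          apply mul_right_cancel₀ hM
          linear_combination hXM (-1) hP + hYM 1 hQ
        · left
          apply mul_right_cancel₀ hM
          linear_combination hXM (-1) hP - hYM (-1) hQ
      have hξ4 : (w p / b p) ^ 4 = 1 := by
        rw [div_pow, hw4, hb4]; norm_num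
      rcases key with hk | hk
      · refine Or.inr (Or.inl ?_)
        rw [← hw, cls_eq_iff]
        refine rel_symm ⟨w p / b p, hξ4, ?_⟩
        funext m
        simp only [Pi.smul_apply, smul_eq_mul]
        rcases cover hu m with rfl | rfl | rfl | rfl
        · field_simp
          linear_combination hk
        · field_simp
        · field_simp
          linear_combination -hpq
        · field_simp
          linear_combination -hpr
      · refine Or.inr (Or.inr ?_)
        rw [← hw, Set.mem_singleton_iff, cls_eq_iff]
        refine rel_symm ⟨w p / b p, hξ4, ?_⟩
        funext m
        simp only [Pi.smul_apply, smul_eq_mul]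
        rcases cover hu m with rfl | rfl | rfl | rfl
        · rw [negj_same]
          field_simp
          linear_combination hk
        · rw [negj_other (Ne.symm h1)]
          field_simp
        · rw [negj_other (Ne.symm h2)]
          field_simp
          linear_combination -hpq
        · rw [negj_other (Ne.symm h3)]
          field_simp
          linear_combination -hpr
  · intro hc
    rcases hc with rfl | rfl | rfl
    · exact mem_LambdaHat_iff.2 ⟨L1sub (clsE_mem_Lambda1 j), E j, rfl, Set.inter_subset_left⟩
    · exact mem_LambdaHat_iff.2
        ⟨L3sub (b_mem_Lambda3 hb hbne hprod), b, rfl, Set.inter_subset_right⟩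
    · refine mem_LambdaHat_iff.2
        ⟨L3sub (negj_mem_Lambda3 hu h1 h2 h3 h4 h5 h6 hb hbne hprod), negj j b, rfl, ?_⟩
      rintro x ⟨hx1, hx2⟩
      rw [mem_Xa_E] at hx1
      show ∑ m, negj j b m * x m = 0
      have hd : ∀ m, negj j b m * x m = b m * x m - (if m = j then 2 * b j * x j else 0) := by
        intro m
        by_cases hm : m = j
        · subst hm; rw [negj_same, if_pos rfl]; ring
        · rw [negj_other hm, if_neg hm, sub_zero]
      rw [Finset.sum_congr rfl fun m _ => hd m, Finset.sum_sub_distrib,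
        Finset.sum_ite_eq' Finset.univ j (fun _ => 2 * b j * x j)]
      simp only [Finset.mem_univ, if_true]
      rw [hx2, hx1]
      ring

lemma mult_three {j p q r : Fin 4}
    (hu : ({j, p, q, r} : Finset (Fin 4)) = Finset.univ)
    (h1 : j ≠ p) (h2 : j ≠ q) (h3 : j ≠ r) (h4 : p ≠ q) (h5 : p ≠ r) (h6 : q ≠ r)
    {b : V} (hb : PsiV b) (hbne : ∀ m, b m ≠ 0)
    (hprod : prod4 b = 1 ∨ prod4 b = -1) :
    mult (cls (E j)) (cls b) = 3 := by
  rw [mult, hat_three hu h1 h2 h3 h4 h5 h6 hb hbne hprod]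
  rw [Set.ncard_insert_of_notMem (by
      simp only [Set.mem_insert_iff, Set.mem_singleton_iff]
      push_neg
      constructor
      · exact clsE_ne_cls_of_supp h1.symm (hbne p)
      · exact clsE_ne_cls_of_supp h1.symm (b := negj j b)
          (by rw [negj_other (Ne.symm h1)]; exact hbne p)) ((Set.finite_singleton _).insert _),
    Set.ncard_pair (cls_negj_ne h1 (hbne p) (hbne j))]
lemma supp_zero {b : V} {X : Set (Fin 4)} (h : Supp b = X) {m : Fin 4} (hm : m ∉ X) :
    b m = 0 := by
  by_contra h0
  exact hm (h ▸ (h0 : m ∈ Supp b))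

lemma exists_fourth (j s t : Fin 4) (h1 : j ≠ s) (h2 : j ≠ t) (h3 : s ≠ t) :
    ∃ r, ({j, s, t, r} : Finset (Fin 4)) = Finset.univ ∧ j ≠ r ∧ s ≠ r ∧ t ≠ r := by
  revert h1 h2 h3
  revert j s t
  decide

/-- the twelve classes with support a pair avoiding `j` -/
def S2 (p q r : Fin 4) : Set Phi :=
  ((fun ζ => cls (E p + ζ • E q)) '' mu4) ∪
    (((fun ζ => cls (E p + ζ • E r)) '' mu4) ∪ ((fun ζ => cls (E q + ζ • E r)) '' mu4))

/-- the twelve classes with support a pair containing `j` -/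
def S6 (j p q r : Fin 4) : Set Phi :=
  ((fun ζ => cls (E j + ζ • E p)) '' mu4) ∪
    (((fun ζ => cls (E j + ζ • E q)) '' mu4) ∪ ((fun ζ => cls (E j + ζ • E r)) '' mu4))

lemma S2_sub {p q r : Fin 4} (h4 : p ≠ q) (h5 : p ≠ r) (h6 : q ≠ r) :
    S2 p q r ⊆ Lambda2 := by
  rintro B (⟨ζ, hζ, rfl⟩ | ⟨ζ, hζ, rfl⟩ | ⟨ζ, hζ, rfl⟩)
  · exact clsEst_mem_Lambda2 h4 hζ
  · exact clsEst_mem_Lambda2 h5 hζ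
  · exact clsEst_mem_Lambda2 h6 hζ

lemma S6_sub {j p q r : Fin 4} (h1 : j ≠ p) (h2 : j ≠ q) (h3 : j ≠ r) :
    S6 j p q r ⊆ Lambda2 := by
  rintro B (⟨ζ, hζ, rfl⟩ | ⟨ζ, hζ, rfl⟩ | ⟨ζ, hζ, rfl⟩)
  · exact clsEst_mem_Lambda2 h1 hζ
  · exact clsEst_mem_Lambda2 h2 hζ
  · exact clsEst_mem_Lambda2 h3 hζ

lemma S2_ne {p q r j : Fin 4} (hB : B' ∈ S2 p q r) (h4 : p ≠ q) (h5 : p ≠ r) (h6 : q ≠ r) :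
    B' ≠ cls (E j) := by
  rcases hB with ⟨ζ, hζ, rfl⟩ | ⟨ζ, hζ, rfl⟩ | ⟨ζ, hζ, rfl⟩
  · exact clsEst_ne_clsE h4 (mu4_ne_zero hζ)
  · exact clsEst_ne_clsE h5 (mu4_ne_zero hζ)
  · exact clsEst_ne_clsE h6 (mu4_ne_zero hζ)

lemma S6_ne {j p q r : Fin 4} (hB : B' ∈ S6 j p q r) (h1 : j ≠ p) (h2 : j ≠ q) (h3 : j ≠ r) :
    B' ≠ cls (E j) := by
  rcases hB with ⟨ζ, hζ, rfl⟩ | ⟨ζ, hζ, rfl⟩ | ⟨ζ, hζ, rfl⟩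
  · exact clsEst_ne_clsE h1 (mu4_ne_zero hζ)
  · exact clsEst_ne_clsE h2 (mu4_ne_zero hζ)
  · exact clsEst_ne_clsE h3 (mu4_ne_zero hζ)

lemma mult_L2 {j p q r : Fin 4}
    (hu : ({j, p, q, r} : Finset (Fin 4)) = Finset.univ)
    (h1 : j ≠ p) (h2 : j ≠ q) (h3 : j ≠ r) (h4 : p ≠ q) (h5 : p ≠ r) (h6 : q ≠ r)
    {B : Phi} (hB : B ∈ Lambda2) :
    (mult (cls (E j)) B = 2 ∧ B ∈ S2 p q r) ∨
      (mult (cls (E j)) B = 6 ∧ B ∈ S6 j p q r) := by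
  obtain ⟨b, hbB, hPsi, hn2⟩ := hB
  obtain ⟨s, t, hst, hsupp⟩ := Set.ncard_eq_two.1 hn2
  have hbs : b s ≠ 0 := by
    have : s ∈ Supp b := by rw [hsupp]; simp
    exact this
  have hbt : b t ≠ 0 := by
    have : t ∈ Supp b := by rw [hsupp]; simp
    exact this
  subst hbB
  by_cases hjs : s = j
  · -- support is {j, t}
    subst hjs
    right
    have hm6 : mult (cls (E s)) (cls b) = 6 :=
      mult_six hst (L2sub ⟨b, rfl, hPsi, hn2⟩)
        (fun m hm1 hm2 => supp_zero hsupp (by simp [hm1, hm2])) hbt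
    refine ⟨hm6, ?_⟩
    obtain ⟨ζ, hζ, hcls⟩ := rep2 hPsi hst hsupp
    rcases cover hu t with rfl | rfl | rfl | rfl
    · exact absurd rfl hst
    · exact Or.inl ⟨ζ, hζ, hcls.symm⟩
    · exact Or.inr (Or.inl ⟨ζ, hζ, hcls.symm⟩)
    · exact Or.inr (Or.inr ⟨ζ, hζ, hcls.symm⟩)
  · by_cases hjt : t = j
    · subst hjt
      right
      have hsupp' : Supp b = {t, s} := by rw [hsupp, Set.pair_comm]
      have hm6 : mult (cls (E t)) (cls b) = 6 :=
        mult_six (Ne.symm hjs) (L2sub ⟨b, rfl, hPsi, hn2⟩)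
          (fun m hm1 hm2 => supp_zero hsupp (by simp [hm1, hm2])) hbs
      refine ⟨hm6, ?_⟩
      obtain ⟨ζ, hζ, hcls⟩ := rep2 hPsi (Ne.symm hjs) hsupp'
      rcases cover hu s with rfl | rfl | rfl | rfl
      · exact absurd rfl hjs
      · exact Or.inl ⟨ζ, hζ, hcls.symm⟩
      · exact Or.inr (Or.inl ⟨ζ, hζ, hcls.symm⟩)
      · exact Or.inr (Or.inr ⟨ζ, hζ, hcls.symm⟩)
    · -- support avoids j
      left
      obtain ⟨r', hu', hjr', hsr', htr'⟩ :=
        exists_fourth j s t (fun h => hjs h.symm) (fun h => hjt h.symm) hst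
      have hm2 : mult (cls (E j)) (cls b) = 2 :=
        mult_two hu' (fun h => hjs h.symm) (fun h => hjt h.symm) hjr' hst hsr' htr'
          hPsi (L2sub ⟨b, rfl, hPsi, hn2⟩)
          (fun m hm1 hm2 => supp_zero hsupp (by simp [hm1, hm2])) hbs hbt
      refine ⟨hm2, ?_⟩
      have hcls := rep2 hPsi hst hsupp
      have hsupp2 : Supp b = {t, s} := by rw [hsupp, Set.pair_comm]
      have hcls2 := rep2 hPsi (Ne.symm hst) hsupp2
      rcases cover hu s with rfl | rfl | rfl | rfl
      · exact absurd rfl hjs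
      · rcases cover hu t with rfl | rfl | rfl | rfl
        · exact absurd rfl hjt
        · exact absurd rfl hst
        · obtain ⟨ζ, hζ, hc⟩ := hcls
          exact Or.inl ⟨ζ, hζ, hc.symm⟩
        · obtain ⟨ζ, hζ, hc⟩ := hcls
          exact Or.inr (Or.inl ⟨ζ, hζ, hc.symm⟩)
      · rcases cover hu t with rfl | rfl | rfl | rfl
        · exact absurd rfl hjt
        · obtain ⟨ζ, hζ, hc⟩ := hcls2
          exact Or.inl ⟨ζ, hζ, hc.symm⟩
        · exact absurd rfl hst
        · obtain ⟨ζ, hζ, hc⟩ := hcls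
          exact Or.inr (Or.inr ⟨ζ, hζ, hc.symm⟩)
      · rcases cover hu t with rfl | rfl | rfl | rfl
        · exact absurd rfl hjt
        · obtain ⟨ζ, hζ, hc⟩ := hcls2
          exact Or.inr (Or.inl ⟨ζ, hζ, hc.symm⟩)
        · obtain ⟨ζ, hζ, hc⟩ := hcls2
          exact Or.inr (Or.inr ⟨ζ, hζ, hc.symm⟩)
        · exact absurd rfl hst
lemma notpair {a x y : Fin 4} (h1 : a ≠ x) (h2 : a ≠ y) : a ∉ ({x, y} : Set (Fin 4)) := by
  simp [h1, h2]

lemma clsEst_ne_pairs {s t s' t' : Fin 4} (hst : s ≠ t) (hst' : s' ≠ t') {ζ ζ' : ℂ}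
    (hζ : ζ ≠ 0) (hζ' : ζ' ≠ 0)
    (hne : s' ∉ ({s, t} : Set (Fin 4)) ∨ t' ∉ ({s, t} : Set (Fin 4))) :
    cls (E s + ζ • E t) ≠ cls (E s' + ζ' • E t') := by
  intro h
  have hsupp := Supp_eq_of_rel (cls_eq_iff.1 h)
  rw [Supp_Est hst hζ, Supp_Est hst' hζ'] at hsupp
  rcases hne with hn | hn
  · exact hn (by rw [hsupp]; simp)
  · exact hn (by rw [hsupp]; simp)

lemma image_mu4_ncard {s t : Fin 4} (hst : s ≠ t) :
    ((fun ζ => cls (E s + ζ • E t)) '' mu4).ncard = 4 := by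
  have hinj := Set.ncard_image_of_injOn (f := fun ζ => cls (E s + ζ • E t)) (s := mu4)
    (fun x _ y _ h => clsEst_inj hst h)
  rw [hinj, show mu4 = {1, -1, I, -I} from mu4_set_eq, mu4_explicit_ncard]

lemma image_mu4_fin (s t : Fin 4) : ((fun ζ => cls (E s + ζ • E t)) '' mu4).Finite := by
  rw [show mu4 = {1, -1, I, -I} from mu4_set_eq]
  exact ((((Set.finite_singleton _).insert _).insert _).insert _).image _

lemma images_disj' {s t s' t' : Fin 4} (hst : s ≠ t) (hst' : s' ≠ t')
    (hne : s' ∉ ({s, t} : Set (Fin 4)) ∨ t' ∉ ({s, t} : Set (Fin 4))) :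
    Disjoint ((fun ζ => cls (E s + ζ • E t)) '' mu4)
      ((fun ζ => cls (E s' + ζ • E t')) '' mu4 : Set Phi) := by
  rw [Set.disjoint_left]
  rintro B ⟨ζ, hζ, rfl⟩ ⟨ζ', hζ', h⟩
  exact clsEst_ne_pairs hst hst' (mu4_ne_zero hζ) (mu4_ne_zero hζ') hne h.symm

lemma S2_ncard {j p q r : Fin 4}
    (h1 : j ≠ p) (h2 : j ≠ q) (h3 : j ≠ r) (h4 : p ≠ q) (h5 : p ≠ r) (h6 : q ≠ r) :
    (S2 p q r).ncard = 12 := by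
  have d23 := images_disj' h5 h6 (Or.inl (notpair (Ne.symm h4) h6))
  have d12 : Disjoint ((fun ζ => cls (E p + ζ • E q)) '' mu4)
      (((fun ζ => cls (E p + ζ • E r)) '' mu4) ∪ ((fun ζ => cls (E q + ζ • E r)) '' mu4)) := by
    rw [Set.disjoint_union_right]
    exact ⟨images_disj' h4 h5 (Or.inr (notpair (Ne.symm h5) (Ne.symm h6))),
      images_disj' h4 h6 (Or.inr (notpair (Ne.symm h5) (Ne.symm h6)))⟩
  rw [S2, Set.ncard_union_eq d12 (image_mu4_fin _ _) ((image_mu4_fin _ _).union (image_mu4_fin _ _)),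
    Set.ncard_union_eq d23 (image_mu4_fin _ _) (image_mu4_fin _ _),
    image_mu4_ncard h4, image_mu4_ncard h5, image_mu4_ncard h6]

lemma S6_ncard {j p q r : Fin 4}
    (h1 : j ≠ p) (h2 : j ≠ q) (h3 : j ≠ r) (h4 : p ≠ q) (h5 : p ≠ r) (h6 : q ≠ r) :
    (S6 j p q r).ncard = 12 := by
  have d23 := images_disj' h2 h3 (Or.inr (notpair (Ne.symm h3) (Ne.symm h6)))
  have d12 : Disjoint ((fun ζ => cls (E j + ζ • E p)) '' mu4)
      (((fun ζ => cls (E j + ζ • E q)) '' mu4) ∪ ((fun ζ => cls (E j + ζ • E r)) '' mu4)) := by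
    rw [Set.disjoint_union_right]
    exact ⟨images_disj' h1 h2 (Or.inr (notpair (Ne.symm h2) (Ne.symm h4))),
      images_disj' h1 h3 (Or.inr (notpair (Ne.symm h3) (Ne.symm h5)))⟩
  rw [S6, Set.ncard_union_eq d12 (image_mu4_fin _ _) ((image_mu4_fin _ _).union (image_mu4_fin _ _)),
    Set.ncard_union_eq d23 (image_mu4_fin _ _) (image_mu4_fin _ _),
    image_mu4_ncard h1, image_mu4_ncard h2, image_mu4_ncard h3]

lemma S2_S6_disj {j p q r : Fin 4}
    (h1 : j ≠ p) (h2 : j ≠ q) (h3 : j ≠ r) (h4 : p ≠ q) (h5 : p ≠ r) (h6 : q ≠ r) :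
    Disjoint (S2 p q r) (S6 j p q r) := by
  rw [S2, S6, Set.disjoint_union_left]
  constructor
  · rw [Set.disjoint_union_right]
    refine ⟨images_disj' h4 h1 (Or.inl (notpair h1 h2)), ?_⟩
    rw [Set.disjoint_union_right]
    exact ⟨images_disj' h4 h2 (Or.inl (notpair h1 h2)),
      images_disj' h4 h3 (Or.inl (notpair h1 h2))⟩
  rw [Set.disjoint_union_left]
  constructor
  · rw [Set.disjoint_union_right]
    refine ⟨images_disj' h5 h1 (Or.inl (notpair h1 h3)), ?_⟩
    rw [Set.disjoint_union_right]
    exact ⟨images_disj' h5 h2 (Or.inl (notpair h1 h3)),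
      images_disj' h5 h3 (Or.inl (notpair h1 h3))⟩
  rw [Set.disjoint_union_right]
  refine ⟨images_disj' h6 h1 (Or.inl (notpair h2 h3)), ?_⟩
  rw [Set.disjoint_union_right]
  exact ⟨images_disj' h6 h2 (Or.inl (notpair h2 h3)),
    images_disj' h6 h3 (Or.inl (notpair h2 h3))⟩

lemma mult_L1 {j : Fin 4} {B : Phi} (hB : B ∈ Lambda1) (hne : B ≠ cls (E j)) :
    mult (cls (E j)) B = 6 ∧ ∃ k, k ≠ j ∧ B = cls (E k) := by
  obtain ⟨b, hbB, hPsi, hn1⟩ := hB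
  obtain ⟨k, hcls⟩ := rep1 hPsi hn1
  subst hbB
  have hk : k ≠ j := fun h => hne (by rw [hcls, h])
  refine ⟨?_, k, hk, hcls⟩
  rw [hcls]
  exact mult_six (Ne.symm hk) (L1sub (clsE_mem_Lambda1 k))
    (fun m hm1 hm2 => by simp [E, hm2]) (by simp [E])

lemma mult_L3 {j p q r : Fin 4}
    (hu : ({j, p, q, r} : Finset (Fin 4)) = Finset.univ)
    (h1 : j ≠ p) (h2 : j ≠ q) (h3 : j ≠ r) (h4 : p ≠ q) (h5 : p ≠ r) (h6 : q ≠ r)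
    {B : Phi} (hB : B ∈ Lambda3) :
    mult (cls (E j)) B = 3 ∧ B ≠ cls (E j) := by
  obtain ⟨b, hbB, hPsi, hn4, hprod⟩ := hB
  have hbne := supp_univ hn4
  subst hbB
  exact ⟨mult_three hu h1 h2 h3 h4 h5 h6 hPsi hbne hprod,
    fun h => clsE_ne_cls_of_supp (Ne.symm h1) (hbne p) h.symm⟩
lemma M_card : ({1, -1, I, -I} : Finset ℂ).card = 4 := by
  rw [Finset.card_insert_of_notMem (by norm_num [Complex.ext_iff]),
    Finset.card_insert_of_notMem (by norm_num [Complex.ext_iff]),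
    Finset.card_insert_of_notMem (by norm_num [Complex.ext_iff]), Finset.card_singleton]

/-- parameter set for the 32 classes of `Λ₃` -/
def F32 : Finset (ℂ × ℂ × ℂ) :=
  ((({1, -1, I, -I} : Finset ℂ) ×ˢ ({1, -1, I, -I} : Finset ℂ)) ×ˢ ({1, -1} : Finset ℂ)).image
    (fun w => (w.1.1, w.1.2, w.2 * w.1.1 ^ 3 * w.1.2 ^ 3))

lemma mem_M_iff {x : ℂ} : x ∈ ({1, -1, I, -I} : Finset ℂ) ↔ x ^ 4 = 1 := by
  rw [mu4_iff]
  simp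

lemma mem_F32 {v : ℂ × ℂ × ℂ} : v ∈ F32 ↔
    v.1 ^ 4 = 1 ∧ v.2.1 ^ 4 = 1 ∧ v.2.2 ^ 4 = 1 ∧
      (v.1 * v.2.1 * v.2.2 = 1 ∨ v.1 * v.2.1 * v.2.2 = -1) := by
  constructor
  · intro h
    simp only [F32, Finset.mem_image, Finset.mem_product] at h
    obtain ⟨⟨⟨x, y⟩, e⟩, ⟨⟨hx, hy⟩, he⟩, rfl⟩ := h
    rw [mem_M_iff] at hx hy
    have he' : e = 1 ∨ e = -1 := by
      simpa using he
    have he4 : e ^ 4 = 1 := by rcases he' with rfl | rfl <;> norm_num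
    refine ⟨hx, hy, ?_, ?_⟩
    · show (e * x ^ 3 * y ^ 3) ^ 4 = 1
      rw [show (e * x ^ 3 * y ^ 3) ^ 4 = e ^ 4 * (x ^ 4) ^ 3 * (y ^ 4) ^ 3 by ring,
        he4, hx, hy]
      ring
    · show x * y * (e * x ^ 3 * y ^ 3) = 1 ∨ x * y * (e * x ^ 3 * y ^ 3) = -1
      have : x * y * (e * x ^ 3 * y ^ 3) = e * (x ^ 4) * (y ^ 4) := by ring
      rw [this, hx, hy, mul_one, mul_one]
      exact he'
  · rintro ⟨hx, hy, hz, hxyz⟩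
    refine Finset.mem_image.2 ⟨((v.1, v.2.1), v.1 * v.2.1 * v.2.2), ?_, ?_⟩
    · rw [Finset.mem_product]
      constructor
      · rw [Finset.mem_product]
        exact ⟨mem_M_iff.2 hx, mem_M_iff.2 hy⟩
      · rcases hxyz with h | h <;> rw [h] <;> simp
    · show (v.1, v.2.1, v.1 * v.2.1 * v.2.2 * v.1 ^ 3 * v.2.1 ^ 3) = v
      have : v.1 * v.2.1 * v.2.2 * v.1 ^ 3 * v.2.1 ^ 3 = v.2.2 := by
        rw [show v.1 * v.2.1 * v.2.2 * v.1 ^ 3 * v.2.1 ^ 3 = v.2.2 * v.1 ^ 4 * v.2.1 ^ 4 by ring,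
          hx, hy]
        ring
      rw [this]

lemma F32_card : F32.card = 32 := by
  rw [F32, Finset.card_image_of_injOn, Finset.card_product, Finset.card_product, M_card,
    Finset.card_insert_of_notMem (by norm_num [Complex.ext_iff]), Finset.card_singleton]
  · intro w hw w' hw' h
    simp only [Finset.mem_coe, Finset.mem_product, mem_M_iff] at hw hw'
    obtain ⟨hxy, -⟩ := hw
    obtain ⟨hxy', -⟩ := hw'
    have h1 : w.1.1 = w'.1.1 := congrArg (fun v => v.1) h
    have h2 : w.1.2 = w'.1.2 := congrArg (fun v => v.2.1) h
    have h3 : w.2 * w.1.1 ^ 3 * w.1.2 ^ 3 = w'.2 * w'.1.1 ^ 3 * w'.1.2 ^ 3 :=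
      congrArg (fun v => v.2.2) h
    rw [← h1, ← h2] at h3
    have hne : w.1.1 ^ 3 * w.1.2 ^ 3 ≠ 0 :=
      mul_ne_zero (pow_ne_zero _ (mu4_ne_zero hxy.1)) (pow_ne_zero _ (mu4_ne_zero hxy.2))
    have he : w.2 = w'.2 := by
      apply mul_right_cancel₀ hne
      linear_combination h3
    exact Prod.ext (Prod.ext h1 h2) he

/-- the canonical representatives for `Λ₃` -/
def vec4 (j p q r : Fin 4) (x y z : ℂ) : V := E j + x • E p + y • E q + z • E r

lemma E_same (j : Fin 4) : E j j = 1 := if_pos rfl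

lemma E_ne {m j : Fin 4} (h : m ≠ j) : E j m = 0 := if_neg h

lemma vec4_j {j p q r : Fin 4} (h1 : j ≠ p) (h2 : j ≠ q) (h3 : j ≠ r) (x y z : ℂ) :
    vec4 j p q r x y z j = 1 := by
  show E j j + x * E p j + y * E q j + z * E r j = 1
  rw [E_same, E_ne h1, E_ne h2, E_ne h3]
  ring

lemma vec4_p {j p q r : Fin 4} (h1 : j ≠ p) (h4 : p ≠ q) (h5 : p ≠ r) (x y z : ℂ) :
    vec4 j p q r x y z p = x := by
  show E j p + x * E p p + y * E q p + z * E r p = x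
  rw [E_same, E_ne (Ne.symm h1), E_ne h4, E_ne h5]
  ring

lemma vec4_q {j p q r : Fin 4} (h2 : j ≠ q) (h4 : p ≠ q) (h6 : q ≠ r) (x y z : ℂ) :
    vec4 j p q r x y z q = y := by
  show E j q + x * E p q + y * E q q + z * E r q = y
  rw [E_same, E_ne (Ne.symm h2), E_ne (Ne.symm h4), E_ne h6]
  ring

lemma vec4_r {j p q r : Fin 4} (h3 : j ≠ r) (h5 : p ≠ r) (h6 : q ≠ r) (x y z : ℂ) :
    vec4 j p q r x y z r = z := by
  show E j r + x * E p r + y * E q r + z * E r r = z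
  rw [E_same, E_ne (Ne.symm h3), E_ne (Ne.symm h5), E_ne (Ne.symm h6)]
  ring

lemma vec4_inj {j p q r : Fin 4}
    (h1 : j ≠ p) (h2 : j ≠ q) (h3 : j ≠ r) (h4 : p ≠ q) (h5 : p ≠ r) (h6 : q ≠ r)
    {v v' : ℂ × ℂ × ℂ}
    (h : cls (vec4 j p q r v.1 v.2.1 v.2.2) = cls (vec4 j p q r v'.1 v'.2.1 v'.2.2)) :
    v = v' := by
  obtain ⟨ξ, hξ, heq⟩ := cls_eq_iff.1 h
  have hj : (1 : ℂ) = ξ * 1 := by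
    have := congrFun heq j
    rwa [vec4_j h1 h2 h3, Pi.smul_apply, smul_eq_mul, vec4_j h1 h2 h3] at this
  have hξ1 : ξ = 1 := by rw [mul_one] at hj; exact hj.symm
  have hp : v'.1 = v.1 := by
    have := congrFun heq p
    rwa [vec4_p h1 h4 h5, Pi.smul_apply, smul_eq_mul, vec4_p h1 h4 h5, hξ1, one_mul] at this
  have hq : v'.2.1 = v.2.1 := by
    have := congrFun heq q
    rwa [vec4_q h2 h4 h6, Pi.smul_apply, smul_eq_mul, vec4_q h2 h4 h6, hξ1, one_mul] at this
  have hr : v'.2.2 = v.2.2 := by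
    have := congrFun heq r
    rwa [vec4_r h3 h5 h6, Pi.smul_apply, smul_eq_mul, vec4_r h3 h5 h6, hξ1, one_mul] at this
  exact Prod.ext hp.symm (Prod.ext hq.symm hr.symm)

lemma vec4_psiv {j p q r : Fin 4}
    (hu : ({j, p, q, r} : Finset (Fin 4)) = Finset.univ)
    (h1 : j ≠ p) (h2 : j ≠ q) (h3 : j ≠ r) (h4 : p ≠ q) (h5 : p ≠ r) (h6 : q ≠ r)
    {x y z : ℂ} (hx : x ^ 4 = 1) (hy : y ^ 4 = 1) (hz : z ^ 4 = 1) :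
    PsiV (vec4 j p q r x y z) := by
  intro m
  rcases cover hu m with rfl | rfl | rfl | rfl
  · refine Set.mem_insert_iff.2 (Or.inr ?_)
    show vec4 _ p q r x y z _ ^ 4 = 1
    rw [vec4_j h1 h2 h3]
    norm_num
  · refine Set.mem_insert_iff.2 (Or.inr ?_)
    show vec4 j _ q r x y z _ ^ 4 = 1
    rw [vec4_p h1 h4 h5]
    exact hx
  · refine Set.mem_insert_iff.2 (Or.inr ?_)
    show vec4 j p _ r x y z _ ^ 4 = 1
    rw [vec4_q h2 h4 h6]
    exact hy
  · refine Set.mem_insert_iff.2 (Or.inr ?_)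
    show vec4 j p q _ x y z _ ^ 4 = 1
    rw [vec4_r h3 h5 h6]
    exact hz

lemma L3_eq {j p q r : Fin 4}
    (hu : ({j, p, q, r} : Finset (Fin 4)) = Finset.univ)
    (h1 : j ≠ p) (h2 : j ≠ q) (h3 : j ≠ r) (h4 : p ≠ q) (h5 : p ≠ r) (h6 : q ≠ r) :
    Lambda3 = (fun v : ℂ × ℂ × ℂ => cls (vec4 j p q r v.1 v.2.1 v.2.2)) '' ↑F32 := by
  ext B
  constructor
  · rintro ⟨b, hbB, hPsi, hn4, hprod⟩
    have hbne := supp_univ hn4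
    have hbj0 : b j ≠ 0 := hbne j
    have hbj4 : b j ^ 4 = 1 := psiv_pow hPsi (hbne j)
    have hbp4 : b p ^ 4 = 1 := psiv_pow hPsi (hbne p)
    have hbq4 : b q ^ 4 = 1 := psiv_pow hPsi (hbne q)
    have hbr4 : b r ^ 4 = 1 := psiv_pow hPsi (hbne r)
    refine ⟨(b p / b j, b q / b j, b r / b j), ?_, ?_⟩
    · rw [Finset.mem_coe, mem_F32]
      refine ⟨?_, ?_, ?_, ?_⟩
      · rw [div_pow, hbp4, hbj4]; norm_num
      · rw [div_pow, hbq4, hbj4]; norm_num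
      · rw [div_pow, hbr4, hbj4]; norm_num
      · have hxyz : b p / b j * (b q / b j) * (b r / b j) = prod4 b := by
          rw [prod4, prod_four _ hu h1 h2 h3 h4 h5 h6]
          field_simp
          linear_combination (-(b p * b q * b r)) * hbj4
        rw [hxyz]
        exact hprod
    · rw [← hbB, cls_eq_iff]
      refine ⟨b j, hbj4, ?_⟩
      funext m
      simp only [Pi.smul_apply, smul_eq_mul]
      rcases cover hu m with rfl | rfl | rfl | rfl
      · rw [vec4_j h1 h2 h3, mul_one]
      · rw [vec4_p h1 h4 h5]
        field_simp
      · rw [vec4_q h2 h4 h6]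
        field_simp
      · rw [vec4_r h3 h5 h6]
        field_simp
  · rintro ⟨v, hv, rfl⟩
    rw [Finset.mem_coe, mem_F32] at hv
    obtain ⟨hx, hy, hz, hxyz⟩ := hv
    refine b_mem_Lambda3 (vec4_psiv hu h1 h2 h3 h4 h5 h6 hx hy hz) ?_ ?_
    · intro m
      rcases cover hu m with rfl | rfl | rfl | rfl
      · rw [vec4_j h1 h2 h3]; norm_num
      · rw [vec4_p h1 h4 h5]; exact mu4_ne_zero hx
      · rw [vec4_q h2 h4 h6]; exact mu4_ne_zero hy
      · rw [vec4_r h3 h5 h6]; exact mu4_ne_zero hz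
    · have hpr : prod4 (vec4 j p q r v.1 v.2.1 v.2.2) = v.1 * v.2.1 * v.2.2 := by
        rw [prod4, prod_four _ hu h1 h2 h3 h4 h5 h6, vec4_j h1 h2 h3, vec4_p h1 h4 h5,
          vec4_q h2 h4 h6, vec4_r h3 h5 h6]
        ring
      rw [hpr]
      exact hxyz

lemma L3_ncard {j p q r : Fin 4}
    (hu : ({j, p, q, r} : Finset (Fin 4)) = Finset.univ)
    (h1 : j ≠ p) (h2 : j ≠ q) (h3 : j ≠ r) (h4 : p ≠ q) (h5 : p ≠ r) (h6 : q ≠ r) :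
    Lambda3.ncard = 32 := by
  rw [L3_eq hu h1 h2 h3 h4 h5 h6,
    Set.ncard_image_of_injOn (fun v _ v' _ h => vec4_inj h1 h2 h3 h4 h5 h6 h),
    Set.ncard_coe_finset, F32_card]
/-- for every `[a] ∈ Λ₁`: `|Λ₁⁶(a)| = 3`, `|Λ₂²(a)| = 12`, `|Λ₂⁶(a)| = 12`,
`|Λ₃³(a)| = 32`, and all the other `Λ_{j'}^m(a)` are empty. -/
theorem stmt11 : ∀ A ∈ Lambda1,
    (LambdaPow Lambda1 6 A).ncard = 3 ∧
    (LambdaPow Lambda2 2 A).ncard = 12 ∧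
    (LambdaPow Lambda2 6 A).ncard = 12 ∧
    (LambdaPow Lambda3 3 A).ncard = 32 ∧
    LambdaPow Lambda1 2 A = ∅ ∧ LambdaPow Lambda1 3 A = ∅ ∧
    LambdaPow Lambda2 3 A = ∅ ∧
    LambdaPow Lambda3 2 A = ∅ ∧ LambdaPow Lambda3 6 A = ∅ := by
  rintro A ⟨a, rfl, hPsi, hn1⟩
  obtain ⟨j, hcls⟩ := rep1 hPsi hn1
  rw [hcls]
  obtain ⟨p, q, r, hu, h1, h2, h3, h4, h5, h6⟩ := others j
  have he2 : LambdaPow Lambda2 2 (cls (E j)) = S2 p q r := by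
    ext B
    constructor
    · rintro ⟨hB2, hne, hm⟩
      rcases mult_L2 hu h1 h2 h3 h4 h5 h6 hB2 with ⟨_, hS⟩ | ⟨hm6, _⟩
      · exact hS
      · exact absurd (hm6.symm.trans hm) (by norm_num)
    · intro hS
      have hB2 := S2_sub h4 h5 h6 hS
      rcases mult_L2 hu h1 h2 h3 h4 h5 h6 hB2 with ⟨hm2, _⟩ | ⟨_, hS6⟩
      · exact ⟨hB2, S2_ne hS h4 h5 h6, hm2⟩
      · exact absurd hS6 (Set.disjoint_left.1 (S2_S6_disj h1 h2 h3 h4 h5 h6) hS)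
  have he6 : LambdaPow Lambda2 6 (cls (E j)) = S6 j p q r := by
    ext B
    constructor
    · rintro ⟨hB2, hne, hm⟩
      rcases mult_L2 hu h1 h2 h3 h4 h5 h6 hB2 with ⟨hm2, _⟩ | ⟨_, hS⟩
      · exact absurd (hm2.symm.trans hm) (by norm_num)
      · exact hS
    · intro hS
      have hB2 := S6_sub h1 h2 h3 hS
      rcases mult_L2 hu h1 h2 h3 h4 h5 h6 hB2 with ⟨_, hS2⟩ | ⟨hm6, _⟩
      · exact absurd hS ((Set.disjoint_left.1 (S2_S6_disj h1 h2 h3 h4 h5 h6)) hS2)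
      · exact ⟨hB2, S6_ne hS h1 h2 h3, hm6⟩
  refine ⟨?_, ?_, ?_, ?_, ?_, ?_, ?_, ?_, ?_⟩
  · -- |Λ₁⁶| = 3
    have he : LambdaPow Lambda1 6 (cls (E j)) = (fun k => cls (E k)) '' {k | k ≠ j} := by
      ext B
      constructor
      · rintro ⟨hB1, hne, _⟩
        obtain ⟨_, k, hk, rfl⟩ := mult_L1 hB1 hne
        exact ⟨k, hk, rfl⟩
      · rintro ⟨k, hk, rfl⟩
        have hne : cls (E k) ≠ cls (E j) := fun h => hk (clsE_inj h)
        exact ⟨clsE_mem_Lambda1 k, hne, (mult_L1 (clsE_mem_Lambda1 k) hne).1⟩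
    rw [he, Set.ncard_image_of_injOn (fun x _ y _ h => clsE_inj h)]
    have hs : {k : Fin 4 | k ≠ j} = ↑(({j}ᶜ : Finset (Fin 4))) := by
      ext k; simp
    rw [hs, Set.ncard_coe_finset, Finset.card_compl, Finset.card_singleton]
    rfl
  · rw [he2, S2_ncard h1 h2 h3 h4 h5 h6]
  · rw [he6, S6_ncard h1 h2 h3 h4 h5 h6]
  · -- |Λ₃³| = 32
    have he : LambdaPow Lambda3 3 (cls (E j)) = Lambda3 := by
      ext B
      constructor
      · rintro ⟨hB3, _, _⟩
        exact hB3
      · intro hB3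
        obtain ⟨hm3, hne⟩ := mult_L3 hu h1 h2 h3 h4 h5 h6 hB3
        exact ⟨hB3, hne, hm3⟩
    rw [he, L3_ncard hu h1 h2 h3 h4 h5 h6]
  · refine Set.eq_empty_iff_forall_notMem.2 fun B ⟨hB, hne, hm⟩ => ?_
    exact absurd ((mult_L1 hB hne).1.symm.trans hm) (by norm_num)
  · refine Set.eq_empty_iff_forall_notMem.2 fun B ⟨hB, hne, hm⟩ => ?_
    exact absurd ((mult_L1 hB hne).1.symm.trans hm) (by norm_num)
  · refine Set.eq_empty_iff_forall_notMem.2 fun B ⟨hB, hne, hm⟩ => ?_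
    rcases mult_L2 hu h1 h2 h3 h4 h5 h6 hB with ⟨hm2, _⟩ | ⟨hm6, _⟩
    · exact absurd (hm2.symm.trans hm) (by norm_num)
    · exact absurd (hm6.symm.trans hm) (by norm_num)
  · refine Set.eq_empty_iff_forall_notMem.2 fun B ⟨hB, hne, hm⟩ => ?_
    exact absurd ((mult_L3 hu h1 h2 h3 h4 h5 h6 hB).1.symm.trans hm) (by norm_num)
  · refine Set.eq_empty_iff_forall_notMem.2 fun B ⟨hB, hne, hm⟩ => ?_
    exact absurd ((mult_L3 hu h1 h2 h3 h4 h5 h6 hB).1.symm.trans hm) (by norm_num)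

end G31
end
end

section
/- Every 1-dimensional linear subspace of ℂ³ that is contained in at least two of the nine hyperplanes H_{ζ}^{xy}, H_{ζ}^{yz}, H_{ζ}^{xz} (ζ ∈ μ₃) is contained in exactly three of them, and there are exactly 12 such subspaces. In other words, the projective line arrangement in ℙ² defined by f = (x³−y³)(y³−z³)(x³−z³) has no double points and exactly 12 singular points, all of multiplicity 3. -/
/-!
A point `[v]` lies on the hyperplane `v i = ζ v j`. If `v i = v j = 0`, all three `ζ ∈ μ₃`
qualify; otherwise only `ζ = v i / v j` can, and it does iff `v i ^ 3 = v j ^ 3`. So the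
multiplicity of `[v]` is a sum of three terms in `{3, 1, 0}`, one per pair of coordinates. For
`v ≠ 0` at most one pair vanishes and equality of cubes is transitive, hence the multiplicity
is `0`, `1` or `3`. The triple points are the three coordinate points and the nine points
`[a : b : 1]` with `a, b ∈ μ₃`.
-/

open Complex

noncomputable section

namespace G31Lines

/-- Vectors in `ℂ³`. -/
abbrev V3 : Type := Fin 3 → ℂ

/-- `μ₃ ⊂ ℂ`, the group of third roots of unity. -/
def mu3 : Set ℂ := {z : ℂ | z ^ 3 = 1}

/-- `H_ζ^{xy} = {x − ζy = 0}`. -/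
def Hxy (ζ : ℂ) : Set V3 := {v | v 0 - ζ * v 1 = 0}

/-- `H_ζ^{yz} = {y − ζz = 0}`. -/
def Hyz (ζ : ℂ) : Set V3 := {v | v 1 - ζ * v 2 = 0}

/-- `H_ζ^{xz} = {x − ζz = 0}`. -/
def Hxz (ζ : ℂ) : Set V3 := {v | v 0 - ζ * v 2 = 0}

/-- The nine hyperplanes of the arrangement `(x³−y³)(y³−z³)(x³−z³) = 0`. -/
def Hyps : Set (Set V3) :=
  {H | ∃ ζ ∈ mu3, H = Hxy ζ ∨ H = Hyz ζ ∨ H = Hxz ζ}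

/-- The multiplicity of a 1-dimensional subspace `p ⊂ ℂ³`: the number of the nine
hyperplanes containing it. -/
noncomputable def multP (p : Submodule ℂ V3) : ℕ :=
  {H | H ∈ Hyps ∧ (p : Set V3) ⊆ H}.ncard

open Submodule

lemma mu3_eq_nthRootsFinset : mu3 = (Polynomial.nthRootsFinset 3 (1 : ℂ) : Set ℂ) := by
  ext z; simp [mu3]

lemma mu3_finite : mu3.Finite := by
  rw [mu3_eq_nthRootsFinset]; exact Finset.finite_toSet _

lemma ncard_mu3 : mu3.ncard = 3 := by
  rw [mu3_eq_nthRootsFinset, Set.ncard_coe_finset]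
  exact (Complex.isPrimitiveRoot_exp 3 (by norm_num)).card_nthRootsFinset

lemma ne_zero_of_mem_mu3 {ζ : ℂ} (h : ζ ∈ mu3) : ζ ≠ 0 := by
  rintro rfl; simp [mu3] at h

def coordHyperplane (i j : Fin 3) (ζ : ℂ) : Set V3 := {v | v i - ζ * v j = 0}

lemma mem_coordHyperplane {i j : Fin 3} {ζ : ℂ} {v : V3} :
    v ∈ coordHyperplane i j ζ ↔ v i = ζ * v j := by
  simp [coordHyperplane, sub_eq_zero]

lemma coe_span_singleton_subset_coordHyperplane {i j : Fin 3} {ζ : ℂ} {v : V3} :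
    (ℂ ∙ v : Set V3) ⊆ coordHyperplane i j ζ ↔ v ∈ coordHyperplane i j ζ := by
  refine ⟨fun h => h (mem_span_singleton_self v), fun h w hw => ?_⟩
  obtain ⟨c, rfl⟩ := mem_span_singleton.mp hw
  rw [mem_coordHyperplane] at h ⊢
  simp [h, mul_left_comm]

lemma coordHyperplane_injective {i j : Fin 3} (hij : i ≠ j) :
    Function.Injective (coordHyperplane i j) := by
  intro a b h
  have : Pi.single i a + Pi.single j 1 ∈ coordHyperplane i j b := h ▸ by
    simp [mem_coordHyperplane, hij, hij.symm]
  simpa [mem_coordHyperplane, hij, hij.symm] using this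

lemma disjoint_image_coordHyperplane {i j k l m : Fin 3} {S T : Set ℂ} (hT : (0 : ℂ) ∉ T)
    (hlm : l ≠ m) (hki : k ≠ i) (hkj : k ≠ j) (hk : k = l ∨ k = m) :
    Disjoint (coordHyperplane i j '' S) (coordHyperplane l m '' T) := by
  refine Set.disjoint_left.mpr ?_
  rintro _ ⟨ζ, -, rfl⟩ ⟨η, hη, h⟩
  -- `Pi.single k 1` lies on every hyperplane of the first family and on none of the second.
  have hmem : Pi.single k 1 ∈ coordHyperplane l m η := h ▸ by
    simp [mem_coordHyperplane, hki, hkj]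
  rw [mem_coordHyperplane] at hmem
  rcases hk with rfl | rfl
  · simp [hlm] at hmem
  · simp only [Pi.single_eq_same, Pi.single_eq_of_ne hlm, mul_one] at hmem
    exact hT (hmem ▸ hη)

lemma Hxy_eq_coordHyperplane : Hxy = coordHyperplane 0 1 := rfl

lemma Hyz_eq_coordHyperplane : Hyz = coordHyperplane 1 2 := rfl

lemma Hxz_eq_coordHyperplane : Hxz = coordHyperplane 0 2 := rfl

def rootsOfRatio (a b : ℂ) : Set ℂ := {ζ | ζ ∈ mu3 ∧ a = ζ * b}

instance (a b : ℂ) : Finite (rootsOfRatio a b) :=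
  (mu3_finite.subset fun _ h => h.1).to_subtype

lemma zero_notMem_rootsOfRatio {a b : ℂ} : (0 : ℂ) ∉ rootsOfRatio a b :=
  fun h => ne_zero_of_mem_mu3 h.1 rfl

lemma setOf_mem_Hyps_and_span_singleton_subset (v : V3) :
    {H | H ∈ Hyps ∧ (ℂ ∙ v : Set V3) ⊆ H} =
      coordHyperplane 0 1 '' rootsOfRatio (v 0) (v 1) ∪
        coordHyperplane 1 2 '' rootsOfRatio (v 1) (v 2) ∪
        coordHyperplane 0 2 '' rootsOfRatio (v 0) (v 2) := by
  ext H
  simp only [Hyps, Hxy_eq_coordHyperplane, Hyz_eq_coordHyperplane, Hxz_eq_coordHyperplane,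
    Set.mem_ofPred_eq, Set.mem_union, Set.mem_image, rootsOfRatio]
  constructor
  · rintro ⟨⟨ζ, hζ, rfl | rfl | rfl⟩, hsub⟩ <;>
      rw [coe_span_singleton_subset_coordHyperplane, mem_coordHyperplane] at hsub
    · exact .inl (.inl ⟨ζ, ⟨hζ, hsub⟩, rfl⟩)
    · exact .inl (.inr ⟨ζ, ⟨hζ, hsub⟩, rfl⟩)
    · exact .inr ⟨ζ, ⟨hζ, hsub⟩, rfl⟩
  · rintro ((⟨ζ, ⟨hζ, hv⟩, rfl⟩ | ⟨ζ, ⟨hζ, hv⟩, rfl⟩) | ⟨ζ, ⟨hζ, hv⟩, rfl⟩) <;>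
      refine ⟨⟨ζ, hζ, by tauto⟩, ?_⟩ <;>
      rwa [coe_span_singleton_subset_coordHyperplane, mem_coordHyperplane]

lemma multP_span_singleton (v : V3) :
    multP (ℂ ∙ v) = (rootsOfRatio (v 0) (v 1)).ncard + (rootsOfRatio (v 1) (v 2)).ncard +
      (rootsOfRatio (v 0) (v 2)).ncard := by
  rw [multP, setOf_mem_Hyps_and_span_singleton_subset, Set.ncard_union_eq, Set.ncard_union_eq,
    Set.ncard_image_of_injective _ (coordHyperplane_injective (by decide)),
    Set.ncard_image_of_injective _ (coordHyperplane_injective (by decide)),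
    Set.ncard_image_of_injective _ (coordHyperplane_injective (by decide))]
  · exact disjoint_image_coordHyperplane (k := 2) zero_notMem_rootsOfRatio
      (by decide) (by decide) (by decide) (by decide)
  · exact Disjoint.union_left
      (disjoint_image_coordHyperplane (k := 2) zero_notMem_rootsOfRatio
        (by decide) (by decide) (by decide) (by decide))
      (disjoint_image_coordHyperplane (k := 0) zero_notMem_rootsOfRatio
        (by decide) (by decide) (by decide) (by decide))

lemma ncard_rootsOfRatio (a b : ℂ) :
    (rootsOfRatio a b).ncard = if a = 0 ∧ b = 0 then 3 else if a ^ 3 = b ^ 3 then 1 else 0 := by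
  split_ifs with h0 hcube
  · obtain ⟨rfl, rfl⟩ := h0
    simpa [rootsOfRatio] using ncard_mu3
  · have hb : b ≠ 0 := by
      rintro rfl
      exact h0 ⟨pow_eq_zero_iff three_ne_zero |>.mp (by simpa using hcube), rfl⟩
    have : rootsOfRatio a b = {a / b} := by
      ext ζ
      simp only [rootsOfRatio, mu3, Set.mem_ofPred_eq, Set.mem_singleton_iff]
      refine ⟨fun ⟨_, h⟩ => by rw [h, mul_div_cancel_right₀ _ hb], ?_⟩
      rintro rfl
      exact ⟨by rw [div_pow, hcube, div_self (pow_ne_zero 3 hb)], (div_mul_cancel₀ a hb).symm⟩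
    rw [this, Set.ncard_singleton]
  · rw [Set.ncard_eq_zero]
    refine Set.eq_empty_of_forall_notMem ?_
    rintro ζ ⟨hζ, rfl⟩
    exact hcube (by rw [mul_pow, show ζ ^ 3 = 1 from hζ, one_mul])

lemma multP_span_singleton_eq_three_of_two_le {v : V3} (hv : v ≠ 0)
    (h : 2 ≤ multP (ℂ ∙ v)) : multP (ℂ ∙ v) = 3 := by
  have hv' : ¬(v 0 = 0 ∧ v 1 = 0 ∧ v 2 = 0) := by simpa [funext_iff, Fin.forall_fin_succ] using hv
  have := fun i => pow_eq_zero_iff (M₀ := ℂ) (a := v i) three_ne_zero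
  rw [multP_span_singleton, ncard_rootsOfRatio, ncard_rootsOfRatio, ncard_rootsOfRatio] at h ⊢
  split_ifs at h ⊢ <;> grind

lemma two_le_multP_span_singleton_iff {v : V3} (hv : v ≠ 0) :
    2 ≤ multP (ℂ ∙ v) ↔ (∃ k, ∀ j ≠ k, v j = 0) ∨ (v 0 ^ 3 = v 1 ^ 3 ∧ v 1 ^ 3 = v 2 ^ 3) := by
  have hv' : ¬(v 0 = 0 ∧ v 1 = 0 ∧ v 2 = 0) := by simpa [funext_iff, Fin.forall_fin_succ] using hv
  have := fun i => pow_eq_zero_iff (M₀ := ℂ) (a := v i) three_ne_zero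
  simp only [Fin.exists_fin_succ, Fin.forall_fin_succ]
  rw [multP_span_singleton, ncard_rootsOfRatio, ncard_rootsOfRatio, ncard_rootsOfRatio]
  split_ifs <;> grind

lemma exists_ne_zero_eq_span_singleton {K W : Type*} [DivisionRing K] [AddCommGroup W]
    [Module K W] {p : Submodule K W} (hp : Module.finrank K p = 1) : ∃ v ≠ 0, p = K ∙ v := by
  obtain ⟨v, hvp, hv⟩ := p.ne_bot_iff.mp (isAtom_iff_finrank_eq_one.mpr hp).ne_bot
  exact ⟨v, hv, eq_span_singleton_of_mem_of_finrank_eq_one hp hvp hv⟩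

lemma span_singleton_eq_of_eq_smul {K W : Type*} [DivisionRing K] [AddCommGroup W]
    [Module K W] {v w : W} {c : K} (hc : c ≠ 0) (h : v = c • w) : K ∙ v = K ∙ w := by
  rw [h, span_singleton_smul_eq (IsUnit.mk0 c hc)]

def triplePoints : Set (Submodule ℂ V3) :=
  Set.range (fun k : Fin 3 => ℂ ∙ (Pi.single k 1 : V3)) ∪
    (fun q : ℂ × ℂ => ℂ ∙ ![q.1, q.2, 1]) '' (mu3 ×ˢ mu3)

lemma setOf_two_le_multP_eq_triplePoints :
    {p : Submodule ℂ V3 | Module.finrank ℂ p = 1 ∧ 2 ≤ multP p} = triplePoints := by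
  ext p
  constructor
  · rintro ⟨hp, h2⟩
    obtain ⟨v, hv, rfl⟩ := exists_ne_zero_eq_span_singleton hp
    rcases (two_le_multP_span_singleton_iff hv).mp h2 with ⟨k, hk⟩ | ⟨h01, h12⟩
    · have hvec : v = v k • Pi.single k 1 := by
        ext j
        by_cases hj : j = k
        · subst hj; simp
        · simp [hk j hj, hj]
      have hvk : v k ≠ 0 := fun h0 => hv (by rw [hvec, h0, zero_smul])
      exact .inl ⟨k, (span_singleton_eq_of_eq_smul hvk hvec).symm⟩
    · have hv2 : v 2 ≠ 0 := by
        intro h0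
        have h1 : v 1 = 0 := pow_eq_zero_iff three_ne_zero |>.mp (by rw [h12, h0]; ring)
        have h0' : v 0 = 0 := pow_eq_zero_iff three_ne_zero |>.mp (by rw [h01, h1]; ring)
        exact hv (funext fun j => by fin_cases j <;> assumption)
      refine .inr ⟨(v 0 / v 2, v 1 / v 2), ⟨?_, ?_⟩, (span_singleton_eq_of_eq_smul hv2 ?_).symm⟩
      · show (v 0 / v 2) ^ 3 = 1
        rw [div_pow, h01, h12, div_self (pow_ne_zero 3 hv2)]
      · show (v 1 / v 2) ^ 3 = 1
        rw [div_pow, h12, div_self (pow_ne_zero 3 hv2)]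
      · ext j; fin_cases j <;> simp [mul_div_cancel₀, hv2]
  · rintro (⟨k, rfl⟩ | ⟨⟨a, b⟩, ⟨ha, hb⟩, rfl⟩)
    · refine ⟨finrank_span_singleton (by simp), (two_le_multP_span_singleton_iff (by simp)).mpr
        (.inl ⟨k, fun j hj => Pi.single_eq_of_ne hj 1⟩)⟩
    · have hne : (![a, b, 1] : V3) ≠ 0 := fun h => by simpa using congrFun h 2
      refine ⟨finrank_span_singleton hne, (two_le_multP_span_singleton_iff hne).mpr
        (.inr ⟨?_, ?_⟩)⟩
      · exact (ha : a ^ 3 = 1).trans (hb : b ^ 3 = 1).symm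
      · exact (hb : b ^ 3 = 1).trans (one_pow 3).symm

lemma exists_mul_eq_of_span_singleton_eq {ι K : Type*} [Field K] {v w : ι → K}
    (h : K ∙ v = K ∙ w) : ∃ c : K, ∀ j, c * v j = w j := by
  obtain ⟨u, hu⟩ := span_singleton_eq_span_singleton.mp h
  exact ⟨u, fun j => congrFun hu j⟩

lemma ncard_triplePoints : triplePoints.ncard = 12 := by
  have hcoord : Function.Injective (fun k : Fin 3 => ℂ ∙ (Pi.single k 1 : V3)) := by
    intro k l h
    obtain ⟨c, hc⟩ := exists_mul_eq_of_span_singleton_eq h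
    by_contra hkl
    simpa [hkl] using hc l
  have hroots : Set.InjOn (fun q : ℂ × ℂ => ℂ ∙ ![q.1, q.2, 1]) (mu3 ×ˢ mu3) := by
    rintro ⟨a, b⟩ - ⟨a', b'⟩ - h
    obtain ⟨c, hc⟩ := exists_mul_eq_of_span_singleton_eq h
    have hc1 : c = 1 := by simpa using hc 2
    simpa [hc1] using And.intro (hc 0) (hc 1)
  have hdisj : Disjoint (Set.range (fun k : Fin 3 => ℂ ∙ (Pi.single k 1 : V3)))
      ((fun q : ℂ × ℂ => ℂ ∙ ![q.1, q.2, 1]) '' (mu3 ×ˢ mu3)) := by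
    refine Set.disjoint_left.mpr ?_
    rintro _ ⟨k, rfl⟩ ⟨⟨a, b⟩, ⟨ha, hb⟩, h⟩
    obtain ⟨c, hc⟩ := exists_mul_eq_of_span_singleton_eq h.symm
    have hab : ∀ j, (![a, b, 1] : V3) j ≠ 0 := by
      simp [Fin.forall_fin_succ, ne_zero_of_mem_mu3 ha, ne_zero_of_mem_mu3 hb]
    obtain ⟨j, hj⟩ : ∃ j, j ≠ k := ⟨k + 1, by fin_cases k <;> decide⟩
    exact hab j (by simpa [hj] using (hc j).symm)
  rw [triplePoints,
    Set.ncard_union_eq hdisj (Set.finite_range _) ((mu3_finite.prod mu3_finite).image _),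
    Set.ncard_range_of_injective hcoord, hroots.ncard_image, Set.ncard_prod, ncard_mu3,
    Nat.card_eq_fintype_card, Fintype.card_fin]

/-- every 1-dimensional linear subspace of `ℂ³` contained in at least two of
the nine hyperplanes is contained in exactly three of them, and there are exactly 12 such
subspaces:  the line arrangement of `f = (x³−y³)(y³−z³)(x³−z³)` has no double points and
exactly 12 singular points, all triple points. -/
theorem stmt19 :
    (∀ p : Submodule ℂ V3, Module.finrank ℂ p = 1 → 2 ≤ multP p → multP p = 3) ∧
    {p : Submodule ℂ V3 | Module.finrank ℂ p = 1 ∧ 2 ≤ multP p}.ncard = 12 := by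
  refine ⟨fun p hp h2 => ?_, by rw [setOf_two_le_multP_eq_triplePoints, ncard_triplePoints]⟩
  obtain ⟨v, hv, rfl⟩ := exists_ne_zero_eq_span_singleton hp
  exact multP_span_singleton_eq_three_of_two_le hv h2

end G31Lines
end
end
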